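/- arXiv:1404.5565 — 5 statements merged into one kernel-verified Lean document; each statement's English description precedes it below -/
import Mathlib

section
/- There is a constant c > 0 with the following property: for all integers m, t, Δ ≥ 1 and every abstract network 𝓘 : Fin m → Finset ℕ whose graph G(𝓘) is connected, has treewidth at most t, and has maximum degree at most Δ, there exists a contraction tree (T, ι) for 𝓘 of rank at most c·Δ·t and of height at most c·Δ·t·(1 + log m). -/
/-- A multigraph: a map assigning to each edge an unordered pair of two
distinct vertices (loops forbidden, parallel edges allowed). -/
structure Multigraph (V E : Type) where
  ends : E → Sym2 V
  no_loops : ∀ e : E, ¬ (ends e).IsDiag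

namespace Multigraph

variable {V E : Type}

/-- Two vertices are adjacent if some edge has them as its endpoints. -/
def Adj (G : Multigraph V E) (a b : V) : Prop :=
  a ≠ b ∧ ∃ e : E, a ∈ G.ends e ∧ b ∈ G.ends e

/-- A multigraph is connected if every two vertices are joined by a finite
sequence of adjacencies. -/
def Connected (G : Multigraph V E) : Prop :=
  Nonempty V ∧ ∀ a b : V, Relation.ReflTransGen G.Adj a b

/-- The number of edges with one endpoint in `S` and the other outside `S`. -/
noncomputable def cutCount (G : Multigraph V E) (S : Set V) : ℕ :=
  Nat.card {e : E // (∃ a ∈ G.ends e, a ∈ S) ∧ (∃ a ∈ G.ends e, a ∉ S)}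

/-- The degree of a vertex: the number of edge-endpoint incidences at `v`. -/
noncomputable def degree (G : Multigraph V E) (v : V) : ℕ :=
  Nat.card {e : E // v ∈ G.ends e}

end Multigraph

/-- Rooted binary trees in which every internal node has exactly two children,
with leaves labeled by elements of `α`. -/
inductive BTree (α : Type) : Type
  | leaf (a : α) : BTree α
  | node (l r : BTree α) : BTree α

namespace BTree

variable {α : Type}

/-- The list of leaf labels of a binary tree. -/
def leaves : BTree α → List α
  | leaf a => [a]
  | node l r => l.leaves ++ r.leaves

/-- The set of leaf labels of a binary tree (for a node `u` of a carving
decomposition, this is `V[u]`). -/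
def leafSet (T : BTree α) : Set α := {a | a ∈ T.leaves}

/-- The height of a binary tree: maximum number of edges on a root-to-leaf path. -/
def height : BTree α → ℕ
  | leaf _ => 0
  | node l r => max l.height r.height + 1

/-- The list of all subtrees (i.e. nodes) of a binary tree. -/
def subtrees : BTree α → List (BTree α)
  | leaf a => [leaf a]
  | node l r => node l r :: (l.subtrees ++ r.subtrees)

end BTree

/-- A rooted carving decomposition of a multigraph `G` on vertex type `V`:
a rooted binary tree whose leaves are labeled bijectively with the vertices. -/
def IsCarvingDecomp {V E : Type} (_G : Multigraph V E) (T : BTree V) : Prop :=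
  T.leaves.Nodup ∧ ∀ v : V, v ∈ T.leaves

/-- The carving decomposition `T` of `G` has width at most `w`:
for every node `u`, `|E(V[u], V∖V[u])| ≤ w`. -/
def CarvWidthLE {V E : Type} (G : Multigraph V E) (T : BTree V) (w : ℕ) : Prop :=
  ∀ u ∈ T.subtrees, G.cutCount u.leafSet ≤ w

/-- A carving decomposition is contractive if for every internal node `u`
there is an edge with one endpoint in `V[u.l]` and the other in `V[u.r]`. -/
def Contractive {V E : Type} (G : Multigraph V E) (T : BTree V) : Prop :=
  ∀ l r : BTree V, BTree.node l r ∈ T.subtrees →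
    ∃ e : E, (∃ a ∈ G.ends e, a ∈ l.leafSet) ∧ (∃ a ∈ G.ends e, a ∈ r.leafSet)

/-- An abstract network: every index occurring in the family belongs to exactly
two members of the family. -/
def IsAbstractNetwork {m : ℕ} (I : Fin m → Finset ℕ) : Prop :=
  ∀ i : ℕ, (∃ j : Fin m, i ∈ I j) →
    (Finset.univ.filter fun j : Fin m => i ∈ I j).card = 2

/-- `G` (with edge-to-index labeling `idx`) is the graph of the abstract network `I`:
edges correspond bijectively to the indices occurring in the family, and the edge with
index `i` joins exactly the two vertices `j` with `i ∈ I j`. -/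
def IsNetworkGraph {m : ℕ} {E : Type} (I : Fin m → Finset ℕ)
    (G : Multigraph (Fin m) E) (idx : E → ℕ) : Prop :=
  Function.Injective idx ∧
  (∀ i : ℕ, (∃ j : Fin m, i ∈ I j) → ∃ e : E, idx e = i) ∧
  (∀ e : E, ∀ j : Fin m, j ∈ G.ends e ↔ idx e ∈ I j)

/-- `G` has a tree decomposition of width at most `t`: a finite tree together with
bags covering all vertices, covering both endpoints of every edge, and such that
the nodes containing any fixed vertex induce a connected subtree; all bags have
size at most `t + 1`. -/
def TreewidthLE {V E : Type} (G : Multigraph V E) (t : ℕ) : Prop :=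
  ∃ (N : Type) (_ : Fintype N) (tr : SimpleGraph N) (bag : N → Set V),
    tr.IsTree ∧
    (∀ v : V, ∃ n : N, v ∈ bag n) ∧
    (∀ e : E, ∃ n : N, ∀ a ∈ G.ends e, a ∈ bag n) ∧
    (∀ v : V, (tr.induce {n : N | v ∈ bag n}).Connected) ∧
    (∀ n : N, (bag n).ncard ≤ t + 1)

/-- The index set `ι(u)` attached to the node `u` of a contraction tree for `I`:
the index set of the family at leaves, and the symmetric difference of the
children's index sets at internal nodes. -/
def iota {m : ℕ} (I : Fin m → Finset ℕ) : BTree (Fin m) → Finset ℕ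
  | .leaf j => I j
  | .node l r => symmDiff (iota I l) (iota I r)

/-- `(T, ι)` is a contraction tree for the abstract network `I`: the leaves of `T` are
labeled bijectively with the members of the family, and at every internal node the
index sets of the two children intersect (so that they can be contracted). -/
def IsContractionTree {m : ℕ} (I : Fin m → Finset ℕ) (T : BTree (Fin m)) : Prop :=
  T.leaves.Nodup ∧ (∀ j : Fin m, j ∈ T.leaves) ∧
  ∀ l r : BTree (Fin m), BTree.node l r ∈ T.subtrees →
    ((iota I l) ∩ (iota I r)).Nonempty

/-!
The index set `ι(u)` of a node `u` is the boundary of its set `S` of leaves: the indices with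
exactly one endpoint in `S`. So it suffices to build a binary tree over the vertices in which
the children of every internal node are joined by an edge and every node has a small boundary.

This is done recursively on connected vertex sets `W` all of whose boundary edges touch the bags
of two nodes `n₁, n₂` of a tree decomposition. Take a centroid `n₃` of `W` in the decomposition
tree and a median `μ` of `n₁, n₂, n₃`. Removing the at most `2(t+1)` vertices of the bags at
`n₃` and `μ` from `W` leaves components of at most half the size, each lying on one side of `μ`
and hence anchored at the bag at `μ` and at the bag of the only one of `n₁, n₂, n₃` on that
side. Recurse on the components, then merge them and the removed vertices one at a time, always
along an edge: every set built has its boundary edges touching four bags, hence at most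
`4Δ(t+1)` of them, and there are at most `2(t+1)(Δ+1)` pieces, which is what the height grows
by each time `|W|` halves.
-/

open Finset

namespace SimpleGraph

variable {N : Type*} {G : SimpleGraph N}

def ReachAvoiding (G : SimpleGraph N) (μ a b : N) : Prop :=
  ∃ w : G.Walk a b, μ ∉ w.support

namespace ReachAvoiding

variable {μ a b c : N}

lemma ne_left (h : G.ReachAvoiding μ a b) : a ≠ μ := by
  rintro rfl
  obtain ⟨w, hw⟩ := h
  exact hw w.start_mem_support

lemma ne_right (h : G.ReachAvoiding μ a b) : b ≠ μ := by
  rintro rfl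
  obtain ⟨w, hw⟩ := h
  exact hw w.end_mem_support

lemma refl (h : a ≠ μ) : G.ReachAvoiding μ a a :=
  ⟨.nil, by simpa [eq_comm] using h⟩

lemma symm (h : G.ReachAvoiding μ a b) : G.ReachAvoiding μ b a := by
  obtain ⟨w, hw⟩ := h
  exact ⟨w.reverse, by simpa using hw⟩

lemma trans (h : G.ReachAvoiding μ a b) (h' : G.ReachAvoiding μ b c) :
    G.ReachAvoiding μ a c := by
  obtain ⟨w, hw⟩ := h
  obtain ⟨w', hw'⟩ := h'
  exact ⟨w.append w', by simp [Walk.mem_support_append_iff, hw, hw']⟩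

end ReachAvoiding

lemma Connected.exists_adj_reachAvoiding (hG : G.Connected) {μ x : N} (hx : x ≠ μ) :
    ∃ b, G.Adj μ b ∧ G.ReachAvoiding μ b x := by
  classical
  obtain ⟨w⟩ := hG.preconnected μ x
  have hp := w.bypass_isPath
  generalize w.bypass = p at hp
  cases p with
  | nil => exact absurd rfl hx
  | cons hadj q => exact ⟨_, hadj, q, ((Walk.cons_isPath_iff _ _).1 hp).2⟩

lemma IsTree.mem_support_of_isPath (hG : G.IsTree) {a b x : N} {p : G.Walk a b}
    (hp : p.IsPath) (hx : x ∈ p.support) (w : G.Walk a b) : x ∈ w.support := by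
  classical
  have : p = w.bypass := (hG.existsUnique_path a b).unique hp w.bypass_isPath
  exact w.support_bypass_subset_support (this ▸ hx)

/-- The two sides of an edge of a tree are disjoint. -/
lemma IsTree.not_reachAvoiding_and (hG : G.IsTree) {a b : N} (hab : G.Adj a b) (x : N) :
    ¬ (G.ReachAvoiding b x a ∧ G.ReachAvoiding a x b) := by
  classical
  rintro ⟨⟨w, hw⟩, ⟨w', hw'⟩⟩
  have hpath : (w.bypass.concat hab).IsPath :=
    w.bypass_isPath.concat (fun h => hw (w.support_bypass_subset_support h)) hab
  exact hw' (hG.mem_support_of_isPath hpath (by simp [Walk.support_concat]) w')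

open Classical in
theorem IsTree.exists_centroid [Finite N] (hG : G.IsTree) {α : Type*} (W : Finset α)
    (ν : α → N) : ∃ μ, ∀ x, 2 * #{v ∈ W | G.ReachAvoiding μ (ν v) x} ≤ #W := by
  have := Fintype.ofFinite N
  set wt : N → N → ℕ := fun μ x => #{v ∈ W | G.ReachAvoiding μ (ν v) x}
  have wt_mono {μ x y : N} (h : G.ReachAvoiding μ x y) : wt μ x ≤ wt μ y :=
    card_le_card fun v hv => by
      simp only [mem_filter] at hv ⊢
      exact ⟨hv.1, hv.2.trans h⟩
  have wt_add {a b : N} (hab : G.Adj a b) : wt b a + wt a b ≤ #W := by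
    rw [← card_union_of_disjoint]
    · exact card_le_card (union_subset (filter_subset _ _) (filter_subset _ _))
    · exact disjoint_filter.2 fun v _ h h' => hG.not_reachAvoiding_and hab (ν v) ⟨h, h'⟩
  by_contra! hheavy
  have heavy_adj (μ : N) : ∃ b, G.Adj μ b ∧ #W < 2 * wt μ b := by
    obtain ⟨x, hx⟩ := hheavy μ
    obtain ⟨v, hv⟩ := card_pos.1 (by omega : 0 < #{v ∈ W | G.ReachAvoiding μ (ν v) x})
    obtain ⟨b, hμb, hbx⟩ := hG.connected.exists_adj_reachAvoiding (mem_filter.1 hv).2.ne_right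
    exact ⟨b, hμb, hx.trans_le (Nat.mul_le_mul_left 2 (wt_mono hbx.symm))⟩
  -- A heavy edge `(a, b)` whose far side is as small as possible; the heavy edge leaving `b`
  -- has a strictly smaller far side.
  set side : N × N → Finset N := fun p => {y | G.ReachAvoiding p.1 y p.2}
  obtain ⟨b₀, hb₀⟩ := heavy_adj hG.connected.nonempty.some
  obtain ⟨⟨a, b⟩, hab, hmin⟩ := exists_min_image
    {p : N × N | G.Adj p.1 p.2 ∧ #W < 2 * wt p.1 p.2} (fun p => #(side p)) ⟨(_, b₀), by simpa⟩
  simp only [mem_filter, mem_univ, true_and] at hab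
  obtain ⟨c, hbc, hc⟩ := heavy_adj b
  have hsub : side (b, c) ⊆ side (a, b) := by
    intro y hy
    obtain ⟨w, hw⟩ := (mem_filter.1 hy).2
    have haw : a ∉ w.support := by
      intro ha
      have hac : G.ReachAvoiding b a c :=
        ⟨w.dropUntil a ha, fun h => hw (w.support_dropUntil_subset_support ha h)⟩
      have := wt_mono hac.symm
      have := wt_add hab.1
      omega
    refine mem_filter.2 ⟨mem_univ _, w.concat hbc.symm, ?_⟩
    simp [Walk.support_concat, haw, hab.1.ne]
  have hlt : #(side (b, c)) < #(side (a, b)) := by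
    refine card_lt_card ⟨hsub, fun h => ?_⟩
    have hb : b ∈ side (a, b) := mem_filter.2 ⟨mem_univ _, .refl hab.1.ne'⟩
    exact (mem_filter.1 (h hb)).2.ne_left rfl
  exact (hmin (b, c) (by simpa using ⟨hbc, hc⟩)).not_gt hlt

theorem IsTree.exists_median [Finite N] (hG : G.IsTree) (S : Finset N) (hS : #S ≤ 3) :
    ∃ μ, (S : Set N).Pairwise fun a b => ¬ G.ReachAvoiding μ a b := by
  classical
  obtain ⟨μ, hμ⟩ := hG.exists_centroid S id
  refine ⟨μ, fun a ha b hb hab h => ?_⟩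
  have hsub : {a, b} ⊆ {v ∈ S | G.ReachAvoiding μ (id v) b} := by
    simp [insert_subset_iff, mem_coe.1 ha, mem_coe.1 hb, h, ReachAvoiding.refl h.ne_right]
  have := card_le_card hsub
  rw [card_pair hab] at this
  have := hμ b
  omega

lemma exists_eq_of_pairwise_not_reachAvoiding {S : Set N} {μ : N}
    (hS : S.Pairwise fun a b => ¬ G.ReachAvoiding μ a b) (x : N) :
    ∃ n, ∀ a ∈ S, G.ReachAvoiding μ x a → a = n := by
  by_cases h : ∃ a ∈ S, G.ReachAvoiding μ x a
  · obtain ⟨a, ha, hxa⟩ := h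
    exact ⟨a, fun b hb hxb => by_contra fun hba => hS ha hb (Ne.symm hba) (hxa.symm.trans hxb)⟩
  · exact ⟨x, fun a ha hxa => absurd ⟨a, ha, hxa⟩ h⟩

lemma Reachable.reachAvoiding_of_induce {s : Set N} {a b : s} (h : (G.induce s).Reachable a b)
    {μ : N} (hμ : μ ∉ s) : G.ReachAvoiding μ a b := by
  obtain ⟨w⟩ := h
  have hw : μ ∉ (w.map (Embedding.induce s).toHom).support := by
    simp only [Walk.support_map, List.mem_map, not_exists, not_and]
    exact fun x _ hx => hμ (hx ▸ x.2)
  exact ⟨_, hw⟩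

end SimpleGraph

lemma Nat.log_two_add_one_le {a b : ℕ} (ha : a ≠ 0) (hab : 2 * a ≤ b) :
    Nat.log 2 a + 1 ≤ Nat.log 2 b := by
  rw [← Nat.log_mul_base one_lt_two ha, mul_comm]
  exact Nat.log_mono_right hab

lemma Nat.log_two_le_two_mul_log (n : ℕ) : (Nat.log 2 n : ℝ) ≤ 2 * Real.log n := by
  have hlog2 := Real.log_two_gt_d9
  have := Real.natLog_le_logb n 2
  rw [Nat.cast_ofNat, Real.logb, le_div_iff₀ (by linarith)] at this
  nlinarith [Real.log_natCast_nonneg n, Nat.cast_nonneg (α := ℝ) (Nat.log 2 n)]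

namespace IsAbstractNetwork

variable {m : ℕ} {I : Fin m → Finset ℕ} {i : ℕ} {j k x : Fin m}

lemma exists_ne_mem (hI : IsAbstractNetwork I) (hj : i ∈ I j) : ∃ k ≠ j, i ∈ I k := by
  obtain ⟨k, hk, hkj⟩ := exists_mem_ne (by rw [hI i ⟨j, hj⟩]; norm_num) j
  exact ⟨k, hkj, (mem_filter.1 hk).2⟩

lemma eq_or_eq_of_mem (hI : IsAbstractNetwork I) (hj : i ∈ I j) (hk : i ∈ I k) (hjk : j ≠ k)
    (hx : i ∈ I x) : x = j ∨ x = k := by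
  by_contra! h
  have hsub : {x, j, k} ⊆ ({y | i ∈ I y} : Finset (Fin m)) := by
    simp [insert_subset_iff, hj, hk, hx]
  have := card_le_card hsub
  rw [hI i ⟨j, hj⟩, card_insert_of_notMem (by simp [h.1, h.2]), card_pair hjk] at this
  omega

end IsAbstractNetwork

/-- `piece v` is the part containing `v` of a partition of `W`. -/
structure IsPieceMap {α : Type*} (W : Finset α) (piece : α → Finset α) : Prop where
  mem_self : ∀ v ∈ W, v ∈ piece v
  subset : ∀ v ∈ W, piece v ⊆ W
  eq_of_mem : ∀ v ∈ W, ∀ a ∈ piece v, piece a = piece v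

namespace Network

variable {m : ℕ} {I : Fin m → Finset ℕ}

variable (I) in
def boundary (S : Finset (Fin m)) : Finset ℕ :=
  {i ∈ S.biUnion I | #{j ∈ S | i ∈ I j} = 1}

lemma boundary_singleton (j : Fin m) : boundary I {j} = I j := by
  ext i
  by_cases hi : i ∈ I j <;> simp [boundary, filter_singleton, hi]

lemma mem_boundary_iff (hI : IsAbstractNetwork I) {S : Finset (Fin m)} {i : ℕ} :
    i ∈ boundary I S ↔ ∃ j ∈ S, ∃ k ∉ S, i ∈ I j ∧ i ∈ I k := by
  constructor
  · intro hi
    obtain ⟨j, hj⟩ := card_eq_one.1 (mem_filter.1 hi).2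
    have hjS : j ∈ S ∧ i ∈ I j := mem_filter.1 (hj ▸ mem_singleton_self j)
    obtain ⟨k, hkj, hk⟩ := hI.exists_ne_mem hjS.2
    refine ⟨j, hjS.1, k, fun hkS => hkj ?_, hjS.2, hk⟩
    simpa [hj] using (mem_filter.2 ⟨hkS, hk⟩ : k ∈ {y ∈ S | i ∈ I y})
  · rintro ⟨j, hj, k, hk, hij, hik⟩
    refine mem_filter.2 ⟨mem_biUnion.2 ⟨j, hj, hij⟩, card_eq_one.2 ⟨j, ?_⟩⟩
    ext x
    simp only [mem_filter, mem_singleton]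
    refine ⟨fun hx => ?_, fun hx => hx ▸ ⟨hj, hij⟩⟩
    exact (hI.eq_or_eq_of_mem hij hik (by rintro rfl; exact hk hj) hx.2).resolve_right
      (by rintro rfl; exact hk hx.1)

lemma mem_boundary_iff_of_mem (hI : IsAbstractNetwork I) {S : Finset (Fin m)} {i : ℕ}
    {j k : Fin m} (hj : i ∈ I j) (hk : i ∈ I k) (hjk : j ≠ k) :
    i ∈ boundary I S ↔ (j ∈ S ↔ k ∉ S) := by
  rw [mem_boundary_iff hI]
  constructor
  · rintro ⟨a, ha, b, hb, hia, hib⟩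
    rcases hI.eq_or_eq_of_mem hj hk hjk hia with rfl | rfl <;>
    rcases hI.eq_or_eq_of_mem hj hk hjk hib with rfl | rfl <;> tauto
  · intro h
    by_cases hjS : j ∈ S
    · exact ⟨j, hjS, k, h.1 hjS, hj, hk⟩
    · exact ⟨k, not_not.1 (mt h.2 hjS), j, hjS, hk, hj⟩

lemma boundary_union (hI : IsAbstractNetwork I) {S S' : Finset (Fin m)} (h : Disjoint S S') :
    boundary I (S ∪ S') = symmDiff (boundary I S) (boundary I S') := by
  ext i
  by_cases hi : ∃ j, i ∈ I j
  · obtain ⟨j, hj⟩ := hi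
    obtain ⟨k, hkj, hk⟩ := hI.exists_ne_mem hj
    have hjS : j ∈ S → j ∉ S' := fun hj => disjoint_left.1 h hj
    have hkS : k ∈ S → k ∉ S' := fun hk => disjoint_left.1 h hk
    simp only [mem_symmDiff, mem_boundary_iff_of_mem hI hj hk hkj.symm, mem_union]
    tauto
  · have hnot (S : Finset (Fin m)) : i ∉ boundary I S := fun h' =>
      hi (by obtain ⟨j, -, hj⟩ := mem_biUnion.1 (mem_filter.1 h').1; exact ⟨j, hj⟩)
    simp [mem_symmDiff, hnot]

lemma iota_eq_boundary (hI : IsAbstractNetwork I) :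
    ∀ T : BTree (Fin m), T.leaves.Nodup → iota I T = boundary I T.leaves.toFinset
  | .leaf j, _ => by simp [iota, BTree.leaves, boundary_singleton]
  | .node l r, hT => by
    rw [BTree.leaves, List.nodup_append] at hT
    rw [iota, iota_eq_boundary hI l hT.1, iota_eq_boundary hI r hT.2.1, BTree.leaves,
      List.toFinset_append, boundary_union hI]
    exact disjoint_left.2 fun a ha hb => hT.2.2 a (List.mem_toFinset.1 ha) a
      (List.mem_toFinset.1 hb) rfl

variable (I) in
def Anchored (S : Finset (Fin m)) (A : Set (Fin m)) : Prop :=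
  ∀ i ∈ boundary I S, ∃ k ∈ A, i ∈ I k

lemma Anchored.mono {S : Finset (Fin m)} {A A' : Set (Fin m)} (h : Anchored I S A)
    (hA : A ⊆ A') : Anchored I S A' :=
  fun i hi => (h i hi).imp fun _ hk => ⟨hA hk.1, hk.2⟩

lemma card_biUnion_le_mul {Δ : ℕ} (hdeg : ∀ j, #(I j) ≤ Δ) (S : Finset (Fin m)) :
    #(S.biUnion I) ≤ Δ * #S :=
  calc #(S.biUnion I) ≤ ∑ j ∈ S, #(I j) := card_biUnion_le
    _ ≤ ∑ _j ∈ S, Δ := sum_le_sum fun j _ => hdeg j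
    _ = Δ * #S := by rw [sum_const, smul_eq_mul, mul_comm]

lemma Anchored.card_boundary_le {S : Finset (Fin m)} {A : Set (Fin m)} (h : Anchored I S A)
    {Δ : ℕ} (hdeg : ∀ j, #(I j) ≤ Δ) : #(boundary I S) ≤ Δ * A.ncard := by
  classical
  calc #(boundary I S) ≤ #(A.toFinset.biUnion I) :=
        card_le_card fun i hi => by simpa using h i hi
    _ ≤ Δ * A.ncard := by
        rw [Set.ncard_eq_toFinset_card']
        exact card_biUnion_le_mul hdeg _

lemma anchored_univ (hI : IsAbstractNetwork I) (A : Set (Fin m)) : Anchored I univ A := by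
  intro i hi
  obtain ⟨j, -, k, hk, -⟩ := (mem_boundary_iff hI).1 hi
  exact absurd (mem_univ k) hk

variable (I) in
structure IsContractionTreeOn (R : ℕ) (S : Finset (Fin m)) (T : BTree (Fin m)) : Prop where
  leaves_toFinset : T.leaves.toFinset = S
  nodup : T.leaves.Nodup
  inter_nonempty : ∀ l r, BTree.node l r ∈ T.subtrees → (iota I l ∩ iota I r).Nonempty
  card_iota_le : ∀ u ∈ T.subtrees, #(iota I u) ≤ R

lemma isContractionTreeOn_leaf {R : ℕ} {v : Fin m} (hv : #(I v) ≤ R) :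
    IsContractionTreeOn I R {v} (.leaf v) where
  leaves_toFinset := by simp [BTree.leaves]
  nodup := by simp [BTree.leaves]
  inter_nonempty := by simp [BTree.subtrees]
  card_iota_le := by simpa [BTree.subtrees, iota] using hv

lemma IsContractionTreeOn.node (hI : IsAbstractNetwork I) {R : ℕ} {S₁ S₂ : Finset (Fin m)}
    {T₁ T₂ : BTree (Fin m)} (h₁ : IsContractionTreeOn I R S₁ T₁)
    (h₂ : IsContractionTreeOn I R S₂ T₂) (hS : Disjoint S₁ S₂) {i : ℕ} {j k : Fin m}
    (hj : j ∈ S₁) (hk : k ∈ S₂) (hij : i ∈ I j) (hik : i ∈ I k)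
    (hR : #(boundary I (S₁ ∪ S₂)) ≤ R) : IsContractionTreeOn I R (S₁ ∪ S₂) (.node T₁ T₂) := by
  have hleaves : (BTree.node T₁ T₂).leaves.toFinset = S₁ ∪ S₂ := by
    rw [BTree.leaves, List.toFinset_append, h₁.leaves_toFinset, h₂.leaves_toFinset]
  have hnodup : (BTree.node T₁ T₂).leaves.Nodup := by
    refine List.nodup_append.2 ⟨h₁.nodup, h₂.nodup, fun a ha b hb hab => ?_⟩
    subst hab
    rw [← List.mem_toFinset, h₁.leaves_toFinset] at ha
    rw [← List.mem_toFinset, h₂.leaves_toFinset] at hb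
    exact disjoint_left.1 hS ha hb
  have hjk : j ≠ k := by rintro rfl; exact disjoint_left.1 hS hj hk
  refine ⟨hleaves, hnodup, fun l r hlr => ?_, fun u hu => ?_⟩
  · simp only [BTree.subtrees, List.mem_cons, BTree.node.injEq, List.mem_append] at hlr
    rcases hlr with ⟨rfl, rfl⟩ | hlr | hlr
    · refine ⟨i, mem_inter.2 ⟨?_, ?_⟩⟩
      · rw [iota_eq_boundary hI _ h₁.nodup, h₁.leaves_toFinset,
          mem_boundary_iff_of_mem hI hij hik hjk]
        exact iff_of_true hj (disjoint_right.1 hS hk)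
      · rw [iota_eq_boundary hI _ h₂.nodup, h₂.leaves_toFinset,
          mem_boundary_iff_of_mem hI hij hik hjk]
        exact iff_of_false (disjoint_left.1 hS hj) (not_not.2 hk)
    · exact h₁.inter_nonempty l r hlr
    · exact h₂.inter_nonempty l r hlr
  · simp only [BTree.subtrees, List.mem_cons, List.mem_append] at hu
    rcases hu with rfl | hu | hu
    · rwa [iota_eq_boundary hI _ hnodup, hleaves]
    · exact h₁.card_iota_le u hu
    · exact h₂.card_iota_le u hu

lemma IsContractionTreeOn.isContractionTree {R : ℕ} {T : BTree (Fin m)}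
    (h : IsContractionTreeOn I R univ T) : IsContractionTree I T :=
  ⟨h.nodup, fun j => List.mem_toFinset.1 (h.leaves_toFinset ▸ mem_univ j), h.inter_nonempty⟩

open Classical

variable (I) in
def Adj (j k : Fin m) : Prop := ∃ i, i ∈ I j ∧ i ∈ I k

lemma Adj.symm {j k : Fin m} (h : Adj I j k) : Adj I k j :=
  h.imp fun _ hi => hi.symm

variable (I) in
def ReachIn (U : Finset (Fin m)) : Fin m → Fin m → Prop :=
  Relation.ReflTransGen fun a b => Adj I a b ∧ a ∈ U ∧ b ∈ U

variable (I) in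
def ConnectedOn (U : Finset (Fin m)) : Prop := ∀ a ∈ U, ∀ b ∈ U, ReachIn I U a b

lemma ReachIn.symm {U : Finset (Fin m)} {a b : Fin m} (h : ReachIn I U a b) :
    ReachIn I U b a := by
  induction h with
  | refl => exact .refl
  | tail _ hcd ih => exact .head ⟨hcd.1.symm, hcd.2.2, hcd.2.1⟩ ih

lemma ConnectedOn.exists_adj {W U : Finset (Fin m)} (hW : ConnectedOn I W) (hUW : U ⊆ W)
    (hU : U.Nonempty) (hWU : (W \ U).Nonempty) : ∃ x ∈ U, ∃ y ∈ W \ U, Adj I x y := by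
  obtain ⟨a, ha⟩ := hU
  obtain ⟨b, hb⟩ := hWU
  induction hW a (hUW ha) b (mem_sdiff.1 hb).1 with
  | refl => exact absurd ha (mem_sdiff.1 hb).2
  | @tail c d _ hcd ih =>
    by_cases hc : c ∈ U
    · exact ⟨c, hc, d, hb, hcd.1⟩
    · exact ih (mem_sdiff.2 ⟨hcd.2.1, hc⟩)

variable (I) in
noncomputable def component (U : Finset (Fin m)) (v : Fin m) : Finset (Fin m) :=
  {u ∈ U | ReachIn I U v u}

section component

variable {U : Finset (Fin m)} {v u w : Fin m}

lemma component_subset : component I U v ⊆ U := filter_subset _ _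

lemma mem_component_self (hv : v ∈ U) : v ∈ component I U v :=
  mem_filter.2 ⟨hv, .refl⟩

lemma reachIn_of_mem_component (h : u ∈ component I U v) : ReachIn I U v u :=
  (mem_filter.1 h).2

lemma component_eq_of_mem (h : u ∈ component I U v) : component I U u = component I U v := by
  have hvu := reachIn_of_mem_component h
  ext x
  simp only [component, mem_filter]
  exact and_congr_right fun _ => ⟨hvu.trans, hvu.symm.trans⟩

lemma mem_component_of_adj (hu : u ∈ component I U v) (huw : Adj I u w) (hw : w ∈ U) :
    w ∈ component I U v :=
  mem_filter.2 ⟨hw, (reachIn_of_mem_component hu).tail ⟨huw, component_subset hu, hw⟩⟩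

lemma reachIn_component_of_mem (hu : u ∈ component I U v) (h : ReachIn I U u w) :
    ReachIn I (component I U v) u w := by
  induction h with
  | refl => exact .refl
  | @tail b c _ hbc ih =>
    have hb : b ∈ component I U v :=
      mem_filter.2 ⟨hbc.2.1, (reachIn_of_mem_component hu).trans (by assumption)⟩
    exact ih.tail ⟨hbc.1, hb, mem_component_of_adj hb hbc.1 hbc.2.2⟩

lemma connectedOn_component : ConnectedOn I (component I U v) := fun _ ha _ hb =>
  reachIn_component_of_mem ha
    ((reachIn_of_mem_component ha).symm.trans (reachIn_of_mem_component hb))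

end component

lemma ConnectedOn.component_eq {W : Finset (Fin m)} (hW : ConnectedOn I W) {v : Fin m}
    (hv : v ∈ W) : component I W v = W :=
  component_subset.antisymm fun u hu => mem_filter.2 ⟨hu, hW v hv u hu⟩

lemma exists_contractionTreeOn_of_pieces_aux (hI : IsAbstractNetwork I) {R h : ℕ}
    {W : Finset (Fin m)} (hW : ConnectedOn I W) {piece : Fin m → Finset (Fin m)}
    (hP : IsPieceMap W piece) (hR : ∀ U ⊆ W, (∀ a ∈ U, piece a ⊆ U) → #(boundary I U) ≤ R)
    (htree : ∀ v ∈ W, ∃ T, IsContractionTreeOn I R (piece v) T ∧ T.height ≤ h) (n : ℕ) :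
    ∀ (U : Finset (Fin m)) (T₀ : BTree (Fin m)) (k : ℕ), #((W \ U).image piece) ≤ n →
      U.Nonempty → U ⊆ W → (∀ a ∈ U, piece a ⊆ U) → IsContractionTreeOn I R U T₀ →
      T₀.height ≤ h + k → ∃ T, IsContractionTreeOn I R W T ∧ T.height ≤ h + k + n := by
  induction n with
  | zero =>
    intro U T₀ k hn _ hUW _ hT₀ hh
    obtain rfl : U = W := hUW.antisymm (sdiff_eq_empty_iff_subset.1 (by simpa using hn))
    exact ⟨T₀, hT₀, hh⟩
  | succ n ih =>
    intro U T₀ k hn hU hUW hUcl hT₀ hh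
    obtain hWU | hWU := (W \ U).eq_empty_or_nonempty
    · obtain rfl : U = W := hUW.antisymm (sdiff_eq_empty_iff_subset.1 hWU)
      exact ⟨T₀, hT₀, by omega⟩
    obtain ⟨x, hx, y, hy, i, hix, hiy⟩ := hW.exists_adj hUW hU hWU
    obtain ⟨hyW, hyU⟩ := mem_sdiff.1 hy
    obtain ⟨Ty, hTy, hhy⟩ := htree y hyW
    have hdisj : Disjoint U (piece y) := disjoint_right.2 fun a ha haU =>
      hyU (hUcl a haU (hP.eq_of_mem y hyW a ha ▸ hP.mem_self y hyW))
    have hcl : ∀ a ∈ U ∪ piece y, piece a ⊆ U ∪ piece y := by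
      intro a ha
      rcases mem_union.1 ha with ha | ha
      · exact (hUcl a ha).trans subset_union_left
      · exact (hP.eq_of_mem y hyW a ha).le.trans subset_union_right
    have hsub : U ∪ piece y ⊆ W := union_subset hUW (hP.subset y hyW)
    have hcount : #((W \ (U ∪ piece y)).image piece) ≤ n := by
      have : (W \ (U ∪ piece y)).image piece ⊆ ((W \ U).image piece).erase (piece y) := by
        intro p hp
        obtain ⟨a, ha, rfl⟩ := mem_image.1 hp
        simp only [mem_sdiff, mem_union, not_or] at ha
        refine mem_erase.2 ⟨fun hay => ha.2.2 (hay ▸ hP.mem_self a ha.1), ?_⟩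
        exact mem_image_of_mem _ (mem_sdiff.2 ⟨ha.1, ha.2.1⟩)
      have := card_le_card this
      rw [card_erase_of_mem (mem_image_of_mem _ hy)] at this
      omega
    have hT₁ := hT₀.node hI hTy hdisj hx (hP.mem_self y hyW) hix hiy (hR _ hsub hcl)
    obtain ⟨T, hT, hTh⟩ := ih (U ∪ piece y) _ (k + 1) hcount
      (hU.mono subset_union_left) hsub hcl hT₁ (by simp only [BTree.height]; omega)
    exact ⟨T, hT, by omega⟩

lemma exists_contractionTreeOn_of_pieces (hI : IsAbstractNetwork I) {R h : ℕ}
    {W : Finset (Fin m)} (hW : ConnectedOn I W) (hne : W.Nonempty)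
    {piece : Fin m → Finset (Fin m)} (hP : IsPieceMap W piece)
    (hR : ∀ U ⊆ W, (∀ a ∈ U, piece a ⊆ U) → #(boundary I U) ≤ R)
    (htree : ∀ v ∈ W, ∃ T, IsContractionTreeOn I R (piece v) T ∧ T.height ≤ h) :
    ∃ T, IsContractionTreeOn I R W T ∧ T.height ≤ h + #(W.image piece) := by
  obtain ⟨v, hv⟩ := hne
  obtain ⟨T₀, hT₀, hh⟩ := htree v hv
  simpa using exists_contractionTreeOn_of_pieces_aux hI hW hP hR htree _ (piece v) T₀ 0
    (card_le_card (image_subset_image sdiff_subset)) ⟨v, hP.mem_self v hv⟩ (hP.subset v hv)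
    (fun a ha => (hP.eq_of_mem v hv a ha).le) hT₀ hh

variable (I) in
noncomputable def piece (W B : Finset (Fin m)) (v : Fin m) : Finset (Fin m) :=
  if v ∈ B then {v} else component I (W \ B) v

section piece

variable {W B : Finset (Fin m)}

lemma piece_of_mem {v : Fin m} (hv : v ∈ B) : piece I W B v = {v} := if_pos hv

lemma piece_of_notMem {v : Fin m} (hv : v ∉ B) : piece I W B v = component I (W \ B) v :=
  if_neg hv

lemma isPieceMap_piece : IsPieceMap W (piece I W B) := by
  refine ⟨fun v hv => ?_, fun v hv => ?_, fun v hv a ha => ?_⟩ <;> by_cases hvB : v ∈ B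
  · simp [piece_of_mem hvB]
  · exact piece_of_notMem hvB ▸ mem_component_self (mem_sdiff.2 ⟨hv, hvB⟩)
  · simpa [piece_of_mem hvB] using hv
  · exact piece_of_notMem hvB ▸ component_subset.trans sdiff_subset
  · rw [piece_of_mem hvB, mem_singleton] at ha
    rw [ha]
  · rw [piece_of_notMem hvB] at ha ⊢
    rw [piece_of_notMem (mem_sdiff.1 (component_subset ha)).2, component_eq_of_mem ha]

/-- An index joining two vertices of `W \ B` stays inside one component. -/
lemma Anchored.union_of_piece_closed (hI : IsAbstractNetwork I) {A : Set (Fin m)}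
    (hA : Anchored I W A) {U : Finset (Fin m)} (hUW : U ⊆ W)
    (hU : ∀ a ∈ U, piece I W B a ⊆ U) : Anchored I U (↑B ∪ A) := by
  intro i hi
  obtain ⟨j, hj, k, hk, hij, hik⟩ := (mem_boundary_iff hI).1 hi
  by_cases hkW : k ∈ W
  · by_cases hkB : k ∈ B
    · exact ⟨k, Or.inl hkB, hik⟩
    by_cases hjB : j ∈ B
    · exact ⟨j, Or.inl hjB, hij⟩
    refine absurd (hU j hj ?_) hk
    rw [piece_of_notMem hjB]
    exact mem_component_of_adj (mem_component_self (mem_sdiff.2 ⟨hUW hj, hjB⟩)) ⟨i, hij, hik⟩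
      (mem_sdiff.2 ⟨hkW, hkB⟩)
  · obtain ⟨x, hx, hix⟩ := hA i ((mem_boundary_iff hI).2 ⟨j, hUW hj, k, hkW, hij, hik⟩)
    exact ⟨x, Or.inr hx, hix⟩

lemma ConnectedOn.exists_adj_component (hW : ConnectedOn I W) (hBW : B ⊆ W) (hB : B.Nonempty)
    {v : Fin m} (hv : v ∈ W \ B) : ∃ x ∈ component I (W \ B) v, ∃ z ∈ B, Adj I x z := by
  obtain ⟨b, hb⟩ := hB
  have hbC : b ∈ W \ component I (W \ B) v :=
    mem_sdiff.2 ⟨hBW hb, fun h => (mem_sdiff.1 (component_subset h)).2 hb⟩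
  obtain ⟨x, hx, z, hz, hxz⟩ := hW.exists_adj (component_subset.trans sdiff_subset)
    ⟨v, mem_component_self hv⟩ ⟨b, hbC⟩
  refine ⟨x, hx, z, by_contra fun hzB => (mem_sdiff.1 hz).2 ?_, hxz⟩
  exact mem_component_of_adj hx hxz (mem_sdiff.2 ⟨(mem_sdiff.1 hz).1, hzB⟩)

/-- Each component of `W \ B` is attached to `B` by an index, and distinct components by
distinct indices. -/
lemma card_image_piece_le (hI : IsAbstractNetwork I) (hW : ConnectedOn I W) (hBW : B ⊆ W)
    (hB : B.Nonempty) : #(W.image (piece I W B)) ≤ #B + #(B.biUnion I) := by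
  have hexit : ∀ C ∈ (W \ B).image (component I (W \ B)), ∃ i ∈ B.biUnion I,
      ∃ a ∈ C, i ∈ I a ∧ a ∉ B := by
    intro C hC
    obtain ⟨v, hv, rfl⟩ := mem_image.1 hC
    obtain ⟨x, hx, z, hz, i, hix, hiz⟩ := hW.exists_adj_component hBW hB hv
    exact ⟨i, mem_biUnion.2 ⟨z, hz, hiz⟩, x, hx, hix, (mem_sdiff.1 (component_subset hx)).2⟩
  choose! f hf hfC using hexit
  have hinj : Set.InjOn f ((W \ B).image (component I (W \ B))) := by
    intro C hC C' hC' hCC'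
    obtain ⟨a, ha, hia, haB⟩ := hfC C hC
    obtain ⟨a', ha', hia', ha'B⟩ := hfC C' hC'
    obtain ⟨b, hb, hib⟩ := mem_biUnion.1 (hf C hC)
    obtain ⟨v, -, rfl⟩ := mem_image.1 hC
    obtain ⟨v', -, rfl⟩ := mem_image.1 hC'
    rw [hCC'] at hia hib
    obtain rfl : a = a' := by
      rcases hI.eq_or_eq_of_mem hia' hib (fun h => ha'B (h ▸ hb)) hia with h | h
      · exact h
      · exact absurd (h ▸ hb) haB
    rw [← component_eq_of_mem ha, component_eq_of_mem ha']
  calc #(W.image (piece I W B))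
      = #(B.image (piece I W B) ∪ (W \ B).image (piece I W B)) := by
        rw [← image_union, union_sdiff_of_subset hBW]
    _ ≤ #(B.image (piece I W B)) + #((W \ B).image (piece I W B)) := card_union_le _ _
    _ ≤ #B + #(B.biUnion I) := by
        refine add_le_add card_image_le ?_
        have : (W \ B).image (piece I W B) = (W \ B).image (component I (W \ B)) :=
          image_congr fun v hv => piece_of_notMem (mem_sdiff.1 hv).2
        rw [this]
        exact card_le_card_of_injOn f hf hinj

end piece

section bags

variable {N : Type*} {bag : N → Set (Fin m)} {t : ℕ}

lemma card_filter_mem_union_le (hbag : ∀ n, (bag n).ncard ≤ t + 1) (W : Finset (Fin m))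
    (a b : N) : #{u ∈ W | u ∈ bag a ∪ bag b} ≤ 2 * (t + 1) := by
  rw [← Set.ncard_coe_finset]
  calc (({u ∈ W | u ∈ bag a ∪ bag b} : Finset (Fin m)) : Set (Fin m)).ncard
      ≤ (bag a ∪ bag b).ncard := Set.ncard_le_ncard fun u hu => (mem_filter.1 hu).2
    _ ≤ 2 * (t + 1) := (Set.ncard_union_le _ _).trans (by linarith [hbag a, hbag b])

lemma card_boundary_le_of_piece_closed (hI : IsAbstractNetwork I) {Δ : ℕ}
    (hdeg : ∀ j, #(I j) ≤ Δ) (hbag : ∀ n, (bag n).ncard ≤ t + 1) {W : Finset (Fin m)}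
    {n₁ n₂ n₃ μ : N} (hA : Anchored I W (bag n₁ ∪ bag n₂)) {U : Finset (Fin m)} (hUW : U ⊆ W)
    (hU : ∀ a ∈ U, piece I W {u ∈ W | u ∈ bag n₃ ∪ bag μ} a ⊆ U) :
    #(boundary I U) ≤ 4 * Δ * (t + 1) := by
  refine ((hA.union_of_piece_closed hI hUW hU).mono (A' := bag n₁ ∪ bag n₂ ∪ bag n₃ ∪ bag μ)
    ?_).card_boundary_le hdeg |>.trans ?_
  · rintro u (hu | hu | hu)
    · rcases (mem_filter.1 hu).2 with h | h <;> simp [h]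
    all_goals simp [hu]
  · have := Set.ncard_union_le (bag n₁ ∪ bag n₂ ∪ bag n₃) (bag μ)
    have := Set.ncard_union_le (bag n₁ ∪ bag n₂) (bag n₃)
    have := Set.ncard_union_le (bag n₁) (bag n₂)
    nlinarith [hbag n₁, hbag n₂, hbag n₃, hbag μ]

end bags

variable (I) in
/-- A tree decomposition of the graph of the network, with the subtree condition in separator
form. -/
structure IsTreeDecomp {N : Type*} (tr : SimpleGraph N) (bag : N → Set (Fin m)) : Prop where
  isTree : tr.IsTree
  exists_mem_bag : ∀ i j k, i ∈ I j → i ∈ I k → ∃ n, j ∈ bag n ∧ k ∈ bag n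
  reachAvoiding : ∀ v n n', v ∈ bag n → v ∈ bag n' → ∀ μ, v ∉ bag μ → tr.ReachAvoiding μ n n'

namespace IsTreeDecomp

variable {N : Type*} {tr : SimpleGraph N} {bag : N → Set (Fin m)} {μ n n' : N}

lemma reachAvoiding_of_adj (hD : IsTreeDecomp I tr bag) {j k : Fin m} (hjk : Adj I j k)
    (hj : j ∉ bag μ) (hk : k ∉ bag μ) (hn : j ∈ bag n) (hn' : k ∈ bag n') :
    tr.ReachAvoiding μ n n' := by
  obtain ⟨i, hij, hik⟩ := hjk
  obtain ⟨n₀, hj₀, hk₀⟩ := hD.exists_mem_bag i j k hij hik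
  exact (hD.reachAvoiding j n n₀ hn hj₀ μ hj).trans (hD.reachAvoiding k n₀ n' hk₀ hn' μ hk)

lemma reachAvoiding_of_reachIn (hD : IsTreeDecomp I tr bag) {U : Finset (Fin m)}
    (hU : ∀ v ∈ U, v ∉ bag μ) {x y : Fin m} (hxy : ReachIn I U x y) (hx : x ∈ U)
    (hn : x ∈ bag n) (hn' : y ∈ bag n') : tr.ReachAvoiding μ n n' := by
  induction hxy generalizing n' with
  | refl => exact hD.reachAvoiding x n n' hn hn' μ (hU x hx)
  | @tail b c _ hbc ih =>
    obtain ⟨i, hib, hic⟩ := hbc.1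
    obtain ⟨n₀, hb₀, hc₀⟩ := hD.exists_mem_bag i b c hib hic
    exact (ih hb₀).trans (hD.reachAvoiding c n₀ n' hc₀ hn' μ (hU c hbc.2.2))

lemma two_mul_card_component_le (hD : IsTreeDecomp I tr bag) {ν : Fin m → N}
    (hν : ∀ v, v ∈ bag (ν v)) {W U : Finset (Fin m)}
    (hμ : ∀ x, 2 * #{v ∈ W | tr.ReachAvoiding μ (ν v) x} ≤ #W) (hUW : U ⊆ W)
    (hU : ∀ v ∈ U, v ∉ bag μ) {v : Fin m} (hv : v ∈ U) : 2 * #(component I U v) ≤ #W := by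
  refine le_trans (Nat.mul_le_mul_left 2 (card_le_card fun u hu => ?_)) (hμ (ν v))
  exact mem_filter.2 ⟨hUW (component_subset hu), (hD.reachAvoiding_of_reachIn hU
    (reachIn_of_mem_component hu) hv (hν v) (hν u)).symm⟩

/-- The component lies on one side of `μ`, and that side contains at most one of `n₁, n₂, n₃`. -/
lemma exists_anchored_component (hI : IsAbstractNetwork I) (hD : IsTreeDecomp I tr bag)
    {ν : Fin m → N} (hν : ∀ v, v ∈ bag (ν v)) {W : Finset (Fin m)} {n₁ n₂ n₃ : N}
    (hW : Anchored I W (bag n₁ ∪ bag n₂))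
    (hμ : ({n₁, n₂, n₃} : Set N).Pairwise fun a b => ¬ tr.ReachAvoiding μ a b) {v : Fin m}
    (hv : v ∈ W \ {u ∈ W | u ∈ bag n₃ ∪ bag μ}) :
    ∃ n', Anchored I (component I (W \ {u ∈ W | u ∈ bag n₃ ∪ bag μ}) v) (bag μ ∪ bag n') := by
  set R := W \ {u ∈ W | u ∈ bag n₃ ∪ bag μ}
  have hR : ∀ u ∈ R, u ∈ W ∧ u ∉ bag n₃ ∧ u ∉ bag μ := fun u hu => by
    simp only [R, mem_sdiff, mem_filter, Set.mem_union, not_and, not_or] at hu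
    exact ⟨hu.1, hu.2 hu.1⟩
  have hside : ∀ j ∈ component I R v, ∀ k a, (k = j ∨ Adj I j k) → k ∉ bag μ → k ∈ bag a →
      tr.ReachAvoiding μ (ν v) a := by
    intro j hj k a hjk hkμ hka
    have hjμ := (hR j (component_subset hj)).2.2
    refine (hD.reachAvoiding_of_reachIn (fun u hu => (hR u hu).2.2)
      (reachIn_of_mem_component hj) hv (hν v) (hν j)).trans ?_
    rcases hjk with rfl | hjk
    · exact hD.reachAvoiding k _ a (hν k) hka μ hkμ
    · exact hD.reachAvoiding_of_adj hjk hjμ hkμ (hν j) hka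
  have hkey : ∀ i ∈ boundary I (component I R v), ∃ k, i ∈ I k ∧ (k ∈ bag μ ∨
      ∃ a ∈ ({n₁, n₂, n₃} : Set N), k ∈ bag a ∧ tr.ReachAvoiding μ (ν v) a) := by
    intro i hi
    obtain ⟨j, hj, k, hk, hij, hik⟩ := (mem_boundary_iff hI).1 hi
    have hjk : j ≠ k := by rintro rfl; exact hk hj
    by_cases hkμ : k ∈ bag μ
    · exact ⟨k, hik, Or.inl hkμ⟩
    by_cases hkW : k ∈ W
    · have hk₃ : k ∈ bag n₃ := by
        by_contra hk₃
        refine hk (mem_component_of_adj hj ⟨i, hij, hik⟩ ?_)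
        simp [R, hkW, hk₃, hkμ]
      exact ⟨k, hik, Or.inr ⟨n₃, by simp, hk₃,
        hside j hj k n₃ (Or.inr ⟨i, hij, hik⟩) hkμ hk₃⟩⟩
    obtain ⟨x, hx, hix⟩ := hW i ((mem_boundary_iff hI).2
      ⟨j, (hR j (component_subset hj)).1, k, hkW, hij, hik⟩)
    by_cases hxμ : x ∈ bag μ
    · exact ⟨x, hix, Or.inl hxμ⟩
    have hjx : x = j ∨ Adj I j x := (hI.eq_or_eq_of_mem hij hik hjk hix).imp id
      fun h : x = k => h ▸ ⟨i, hij, hik⟩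
    rcases hx with hx | hx
    · exact ⟨x, hix, Or.inr ⟨n₁, by simp, hx, hside j hj x n₁ hjx hxμ hx⟩⟩
    · exact ⟨x, hix, Or.inr ⟨n₂, by simp, hx, hside j hj x n₂ hjx hxμ hx⟩⟩
  obtain ⟨n', hn'⟩ := SimpleGraph.exists_eq_of_pairwise_not_reachAvoiding hμ (ν v)
  refine ⟨n', fun i hi => ?_⟩
  obtain ⟨k, hik, hk | ⟨a, ha, hka, hva⟩⟩ := hkey i hi
  · exact ⟨k, Or.inl hk, hik⟩
  · exact ⟨k, Or.inr (hn' a ha hva ▸ hka), hik⟩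

theorem exists_contractionTreeOn [Finite N] (hI : IsAbstractNetwork I)
    (hD : IsTreeDecomp I tr bag) {ν : Fin m → N} (hν : ∀ v, v ∈ bag (ν v)) {t Δ : ℕ}
    (hbag : ∀ n, (bag n).ncard ≤ t + 1) (hdeg : ∀ j, #(I j) ≤ Δ) (W : Finset (Fin m))
    (hne : W.Nonempty) (hW : ConnectedOn I W) (n₁ n₂ : N)
    (hA : Anchored I W (bag n₁ ∪ bag n₂)) :
    ∃ T, IsContractionTreeOn I (4 * Δ * (t + 1)) W T ∧
      T.height ≤ 2 * (t + 1) * (Δ + 1) * (Nat.log 2 #W + 1) := by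
  induction hc : #W using Nat.strong_induction_on generalizing W n₁ n₂ with
  | _ c ih =>
  subst hc
  obtain ⟨n₃, hn₃⟩ := hD.isTree.exists_centroid W ν
  obtain ⟨μ, hμ⟩ := hD.isTree.exists_median {n₁, n₂, n₃} card_le_three
  simp only [coe_insert, coe_singleton] at hμ
  set B := {u ∈ W | u ∈ bag n₃ ∪ bag μ}
  have hBW : B ⊆ W := filter_subset _ _
  have hsmall : ∀ v ∈ W \ B, 2 * #(component I (W \ B) v) ≤ #W := fun v hv =>
    hD.two_mul_card_component_le hν hn₃ sdiff_subset
      (fun u hu h => (mem_sdiff.1 hu).2 (mem_filter.2 ⟨(mem_sdiff.1 hu).1, Or.inl h⟩)) hv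
  have hBne : B.Nonempty := by
    by_contra hB₀
    obtain ⟨v, hv⟩ := hne
    have := hsmall v (by simpa [not_nonempty_iff_eq_empty.1 hB₀] using hv)
    rw [not_nonempty_iff_eq_empty.1 hB₀, sdiff_empty, hW.component_eq hv] at this
    exact absurd this (by have := card_pos.2 ⟨v, hv⟩; omega)
  have hBcard : #B ≤ 2 * (t + 1) := card_filter_mem_union_le hbag W n₃ μ
  have htree : ∀ v ∈ W, ∃ T, IsContractionTreeOn I (4 * Δ * (t + 1)) (piece I W B v) T ∧
      T.height ≤ 2 * (t + 1) * (Δ + 1) * Nat.log 2 #W := by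
    intro v hv
    by_cases hvB : v ∈ B
    · refine ⟨.leaf v, piece_of_mem hvB ▸ isContractionTreeOn_leaf ?_, Nat.zero_le _⟩
      exact (hdeg v).trans (by nlinarith)
    have hvR : v ∈ W \ B := mem_sdiff.2 ⟨hv, hvB⟩
    obtain ⟨n', hn'⟩ := hD.exists_anchored_component hI hν hA hμ hvR
    have hC := hsmall v hvR
    have hCpos : #(component I (W \ B) v) ≠ 0 := (card_pos.2 ⟨v, mem_component_self hvR⟩).ne'
    obtain ⟨T, hT, hh⟩ := ih _ (by omega) _ ⟨v, mem_component_self hvR⟩ connectedOn_component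
      μ n' hn' rfl
    exact ⟨T, piece_of_notMem hvB ▸ hT,
      hh.trans (Nat.mul_le_mul_left _ (Nat.log_two_add_one_le hCpos hC))⟩
  obtain ⟨T, hT, hh⟩ := exists_contractionTreeOn_of_pieces hI hW hne isPieceMap_piece
    (fun U hUW hU => card_boundary_le_of_piece_closed hI hdeg hbag hA hUW hU) htree
  refine ⟨T, hT, hh.trans ?_⟩
  have := (card_image_piece_le hI hW hBW hBne).trans
    (add_le_add_right (card_biUnion_le_mul hdeg B) _)
  nlinarith

end IsTreeDecomp

end Network

namespace IsNetworkGraph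

open Network

variable {m : ℕ} {I : Fin m → Finset ℕ} {E : Type} {G : Multigraph (Fin m) E} {idx : E → ℕ}

lemma card_le_degree [Finite E] (h : IsNetworkGraph I G idx) (j : Fin m) :
    #(I j) ≤ G.degree j := by
  rw [← Nat.card_eq_finsetCard, Multigraph.degree]
  refine Nat.card_le_card_of_surjective (fun e => ⟨idx e.1, (h.2.2 e.1 j).1 e.2⟩) ?_
  rintro ⟨i, hi⟩
  obtain ⟨e, rfl⟩ := h.2.1 i ⟨j, hi⟩
  exact ⟨⟨e, (h.2.2 e j).2 hi⟩, rfl⟩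

lemma connectedOn_univ (h : IsNetworkGraph I G idx) (hG : G.Connected) :
    ConnectedOn I univ := fun a _ b _ =>
  Relation.ReflTransGen.mono (fun _ _ ⟨_, e, hx, hy⟩ =>
    ⟨⟨idx e, (h.2.2 e _).1 hx, (h.2.2 e _).1 hy⟩, mem_univ _, mem_univ _⟩) a b (hG.2 a b)

lemma isTreeDecomp {N : Type} {tr : SimpleGraph N} {bag : N → Set (Fin m)}
    (h : IsNetworkGraph I G idx) (htr : tr.IsTree) (hedge : ∀ e, ∃ n, ∀ a ∈ G.ends e, a ∈ bag n)
    (hbag : ∀ v, (tr.induce {n | v ∈ bag n}).Connected) : IsTreeDecomp I tr bag where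
  isTree := htr
  exists_mem_bag i j k hj hk := by
    obtain ⟨e, rfl⟩ := h.2.1 i ⟨j, hj⟩
    obtain ⟨n, hn⟩ := hedge e
    exact ⟨n, hn j ((h.2.2 e j).2 hj), hn k ((h.2.2 e k).2 hk)⟩
  reachAvoiding v n n' hn hn' _ hμ :=
    ((hbag v).preconnected ⟨n, hn⟩ ⟨n', hn'⟩).reachAvoiding_of_induce hμ

end IsNetworkGraph

/-- There is a constant `c > 0` such that for all `m, t, Δ ≥ 1` and
every abstract network `I : Fin m → Finset ℕ` whose graph `G(I)` is connected, has
treewidth at most `t` and maximum degree at most `Δ`, there exists a contraction tree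
for `I` of rank at most `c·Δ·t` and height at most `c·Δ·t·(1 + log m)`. -/
theorem statement_0 :
    ∃ c : ℝ, 0 < c ∧
      ∀ (m t Δ : ℕ), 1 ≤ m → 1 ≤ t → 1 ≤ Δ →
      ∀ I : Fin m → Finset ℕ, IsAbstractNetwork I →
      (∃ (E : Type) (_ : Fintype E) (G : Multigraph (Fin m) E) (idx : E → ℕ),
          IsNetworkGraph I G idx ∧ G.Connected ∧ TreewidthLE G t ∧
          (∀ v : Fin m, G.degree v ≤ Δ)) →
      ∃ T : BTree (Fin m), IsContractionTree I T ∧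
        (∀ u ∈ T.subtrees, ((iota I u).card : ℝ) ≤ c * Δ * t) ∧
        (T.height : ℝ) ≤ c * Δ * t * (1 + Real.log m) := by
  refine ⟨16, by norm_num, ?_⟩
  rintro m t Δ hm ht hΔ I hI ⟨E, _, G, idx, hG, hconn,
    ⟨N, _, tr, bag, htr, hcover, hedge, hbag, hcard⟩, hdeg⟩
  choose ν hν using hcover
  obtain ⟨T, hT, hh⟩ := (hG.isTreeDecomp htr hedge hbag).exists_contractionTreeOn hI hν hcard
    (fun j => (hG.card_le_degree j).trans (hdeg j)) univ ⟨⟨0, hm⟩, mem_univ _⟩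
    (hG.connectedOn_univ hconn) (ν ⟨0, hm⟩) (ν ⟨0, hm⟩) (Network.anchored_univ hI _)
  rw [card_univ, Fintype.card_fin] at hh
  have ht' : (1 : ℝ) ≤ t := by exact_mod_cast ht
  have hΔ' : (1 : ℝ) ≤ Δ := by exact_mod_cast hΔ
  refine ⟨T, hT.isContractionTree, fun u hu => ?_, ?_⟩
  · calc ((iota I u).card : ℝ) ≤ 4 * Δ * (t + 1) := by exact_mod_cast hT.card_iota_le u hu
      _ ≤ 16 * Δ * t := by nlinarith
  · have hL : (Nat.log 2 m + 1 : ℝ) ≤ 2 * (1 + Real.log m) := by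
      linarith [Nat.log_two_le_two_mul_log m]
    calc (T.height : ℝ) ≤ 2 * (t + 1) * (Δ + 1) * (Nat.log 2 m + 1) := by exact_mod_cast hh
      _ ≤ 8 * Δ * t * (2 * (1 + Real.log m)) :=
        mul_le_mul (by nlinarith) hL (by positivity) (by positivity)
      _ = 16 * Δ * t * (1 + Real.log m) := by ring
end

section
/- Let G be a connected multigraph and let (T,γ) be a rooted carving decomposition of G of width at most w and height at most h. Then G has a contractive rooted carving decomposition of width at most w and height at most w·h. -/
/-!
Induct along `T`. At a node `u` with children `l` and `r`, a connected component `S` of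
`G[V[u]]` is split into two connected halves `A` and `B`, each a union of components of
`G[V[l]]` and of `G[V[r]]` and each of cut at most `w`, and the halves are decomposed
recursively; components lying inside `V[l]` or `V[r]` are handled by the induction hypothesis.
Such a split is found by uncrossing, starting from `S ∩ V[l]` and `S ∩ V[r]`: if a half
falls apart into `A₁` and `A₂` with no edge between them, then
`cut (B ∪ A₁) + cut (B ∪ A₂) = cut B + cut S ≤ 2 w`, so one of the pieces can change sides.
The edge between the two halves joins `V[l]` to `V[r]` inside `S` and lies in neither half;
there are at most `cut V[l] ≤ w` such edges, so each level of `T` costs at most `w` levels.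
-/

open Finset

namespace Multigraph

variable {V E : Type} (G : Multigraph V E)

def Linked (A B : Set V) : Prop :=
  ∃ e : E, (∃ a ∈ G.ends e, a ∈ A) ∧ ∃ b ∈ G.ends e, b ∈ B

/-- Connectivity of `G[S]`, phrased through cuts rather than walks. -/
def ConnectedOn (S : Set V) : Prop :=
  ∀ A ⊆ S, A.Nonempty → (S \ A).Nonempty → G.Linked A (S \ A)

/-- `A ∩ W` is a union of connected components of `G[W]`. -/
def IsSaturated (W A : Set V) : Prop :=
  ¬ G.Linked (A ∩ W) (W \ A)

open Classical in
noncomputable def edgesBetween [Fintype E] (A B : Set V) : Finset E :=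
  {e | (∃ a ∈ G.ends e, a ∈ A) ∧ ∃ b ∈ G.ends e, b ∈ B}

variable {G}

lemma Linked.symm {A B : Set V} (h : G.Linked A B) : G.Linked B A :=
  let ⟨e, ha, hb⟩ := h
  ⟨e, hb, ha⟩

lemma Linked.mono {A A' B B' : Set V} (h : G.Linked A B) (hA : A ⊆ A') (hB : B ⊆ B') :
    G.Linked A' B' :=
  let ⟨e, ⟨a, ha, haA⟩, ⟨b, hb, hbB⟩⟩ := h
  ⟨e, ⟨a, ha, hA haA⟩, ⟨b, hb, hB hbB⟩⟩

lemma IsSaturated.union {W A B : Set V} (hA : G.IsSaturated W A) (hB : G.IsSaturated W B) :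
    G.IsSaturated W (A ∪ B) := by
  rintro ⟨e, ⟨a, ha, haAB, haW⟩, hb⟩
  rcases haAB with haA | haB
  · exact hA ⟨e, ⟨a, ha, haA, haW⟩, hb.imp fun _ ⟨h, hW, hAB⟩ => ⟨h, hW, fun h => hAB (.inl h)⟩⟩
  · exact hB ⟨e, ⟨a, ha, haB, haW⟩, hb.imp fun _ ⟨h, hW, hAB⟩ => ⟨h, hW, fun h => hAB (.inr h)⟩⟩

lemma IsSaturated.of_union_left {W A B : Set V} (h : G.IsSaturated W (A ∪ B))
    (hAB : ¬ G.Linked A B) : G.IsSaturated W A := by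
  rintro ⟨e, ⟨a, ha, haA, haW⟩, ⟨b, hb, hbW, hbA⟩⟩
  by_cases hbB : b ∈ B
  · exact hAB ⟨e, ⟨a, ha, haA⟩, ⟨b, hb, hbB⟩⟩
  · exact h ⟨e, ⟨a, ha, .inl haA, haW⟩, ⟨b, hb, hbW, by simp [hbA, hbB]⟩⟩

lemma IsSaturated.mono {W W' A : Set V} (h : G.IsSaturated W A) (hW : W' ⊆ W) :
    G.IsSaturated W' A :=
  fun h' => h (h'.mono (Set.inter_subset_inter_right A hW) (Set.sdiff_subset_sdiff_left hW))

lemma IsSaturated.inter {W A : Set V} (h : G.IsSaturated W A) : G.IsSaturated W (A ∩ W) :=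
  fun h' => h (h'.mono Set.inter_subset_left fun _ hx => ⟨hx.1, fun hxA => hx.2 ⟨hxA, hx.1⟩⟩)

lemma isSaturated_of_disjoint {W A : Set V} (h : Disjoint A W) : G.IsSaturated W A := by
  rintro ⟨-, ⟨a, -, haA, haW⟩, -⟩
  exact h.notMem_of_mem_left haA haW

lemma Connected.connectedOn_univ (hG : G.Connected) : G.ConnectedOn Set.univ := by
  rintro A - ⟨a, haA⟩ ⟨b, -, hbA⟩
  induction hG.2 a b with
  | refl => exact absurd haA hbA
  | @tail c d _ hcd ih =>
    by_cases hcA : c ∈ A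
    · obtain ⟨-, e, hc, hd⟩ := hcd
      exact ⟨e, ⟨c, hc, hcA⟩, ⟨d, hd, trivial, hbA⟩⟩
    · exact ih hcA

lemma exists_not_linked_of_not_connectedOn {S : Set V} (h : ¬ G.ConnectedOn S) :
    ∃ A ⊆ S, A.Nonempty ∧ (S \ A).Nonempty ∧ ¬ G.Linked A (S \ A) := by
  simpa [ConnectedOn] using h

lemma ConnectedOn.union_of_not_linked {A C D : Set V} (hX : G.ConnectedOn (A ∪ C ∪ D))
    (hA : G.ConnectedOn A) (hAne : A.Nonempty) (hCD : ¬ G.Linked C D) :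
    G.ConnectedOn (A ∪ C) := by
  have key : ∀ R ⊆ C, R.Nonempty → Disjoint A R → G.Linked R ((A ∪ C) \ R) := by
    intro R hRC hR hAR
    have hXR : ((A ∪ C ∪ D) \ R).Nonempty := by
      obtain ⟨a, ha⟩ := hAne
      exact ⟨a, .inl (.inl ha), hAR.notMem_of_mem_left ha⟩
    obtain ⟨e, hr, ⟨y, hy, hyX, hyR⟩⟩ :=
      hX R (hRC.trans (Set.subset_union_right.trans Set.subset_union_left)) hR hXR
    refine ⟨e, hr, ⟨y, hy, ?_, hyR⟩⟩
    rcases hyX with hyAC | hyD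
    · exact hyAC
    · obtain ⟨r, hr', hrR⟩ := hr
      exact absurd ⟨e, ⟨r, hr', hRC hrR⟩, ⟨y, hy, hyD⟩⟩ hCD
  intro P hP hPne hQne
  by_cases hAP : (A \ P).Nonempty
  · by_cases hAP' : (A ∩ P).Nonempty
    · refine (hA (A ∩ P) Set.inter_subset_left hAP' (by simpa using hAP)).mono
        Set.inter_subset_right ?_
      rintro x ⟨hxA, hxP⟩
      exact ⟨.inl hxA, fun h => hxP ⟨hxA, h⟩⟩
    · refine key P (fun x hx => (hP hx).resolve_left fun hxA => hAP' ⟨x, hxA, hx⟩) hPne ?_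
      exact Set.disjoint_left.2 fun x hxA hxP => hAP' ⟨x, hxA, hxP⟩
  · have hQC : (A ∪ C) \ P ⊆ C := fun x ⟨hx, hxP⟩ =>
      hx.resolve_left fun hxA => hAP ⟨x, hxA, hxP⟩
    refine (key _ hQC hQne (Set.disjoint_left.2 fun x hxA hxQ => hAP ⟨x, hxA, hxQ.2⟩)).symm.mono
      ?_ subset_rfl
    rintro x ⟨hx, hxQ⟩
    by_contra hxP
    exact hxQ ⟨hx, hxP⟩

section Cuts

variable [Fintype E]

lemma mem_edgesBetween {A B : Set V} {e : E} :
    e ∈ G.edgesBetween A B ↔ (∃ a ∈ G.ends e, a ∈ A) ∧ ∃ b ∈ G.ends e, b ∈ B := by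
  simp [edgesBetween]

lemma edgesBetween_mono {A A' B B' : Set V} (hA : A ⊆ A') (hB : B ⊆ B') :
    G.edgesBetween A B ⊆ G.edgesBetween A' B' := by
  intro e he
  obtain ⟨⟨a, ha, haA⟩, ⟨b, hb, hbB⟩⟩ := mem_edgesBetween.1 he
  exact mem_edgesBetween.2 ⟨⟨a, ha, hA haA⟩, ⟨b, hb, hB hbB⟩⟩

lemma cutCount_eq_card (S : Set V) : G.cutCount S = #(G.edgesBetween S Sᶜ) := by
  classical
  rw [cutCount, Nat.card_eq_fintype_card, Fintype.card_subtype]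
  simp [edgesBetween]

lemma mem_edgesBetween_compl_of_ends {S : Set V} {e : E} {a b : V} (he : G.ends e = s(a, b)) :
    e ∈ G.edgesBetween S Sᶜ ↔ ¬ (a ∈ S ↔ b ∈ S) := by
  simp only [mem_edgesBetween, he, Sym2.mem_iff, Set.mem_compl_iff]
  grind

lemma cutCount_empty : G.cutCount ∅ = 0 := by
  simp [cutCount_eq_card, mem_edgesBetween, Finset.eq_empty_iff_forall_notMem]

lemma cutCount_add_cutCount {S T : Set V} (h : ¬ G.Linked (S \ T) (T \ S)) :
    G.cutCount S + G.cutCount T = G.cutCount (S ∩ T) + G.cutCount (S ∪ T) := by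
  classical
  have hcard (F : Finset E) : #F = ∑ e, if e ∈ F then 1 else 0 := by simp
  simp only [cutCount_eq_card, hcard, ← sum_add_distrib]
  refine sum_congr rfl fun e _ => ?_
  obtain ⟨a, b, he⟩ : ∃ a b, G.ends e = s(a, b) := Sym2.ind (fun a b => ⟨a, b, rfl⟩) (G.ends e)
  have hab : ¬ ((a ∈ S \ T ∧ b ∈ T \ S) ∨ (b ∈ S \ T ∧ a ∈ T \ S)) := by
    rintro (⟨ha, hb⟩ | ⟨hb, ha⟩)
    · exact h ⟨e, ⟨a, by simp [he], ha⟩, ⟨b, by simp [he], hb⟩⟩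
    · exact h ⟨e, ⟨b, by simp [he], hb⟩, ⟨a, by simp [he], ha⟩⟩
  simp only [mem_edgesBetween_compl_of_ends he, Set.mem_inter_iff, Set.mem_union,
    Set.mem_sdiff] at hab ⊢
  by_cases a ∈ S <;> by_cases a ∈ T <;> by_cases b ∈ S <;> by_cases b ∈ T <;> simp_all

lemma cutCount_union {S T : Set V} (hST : Disjoint S T) (h : ¬ G.Linked S T) :
    G.cutCount (S ∪ T) = G.cutCount S + G.cutCount T := by
  rw [cutCount_add_cutCount (fun h' => h (h'.mono Set.sdiff_subset Set.sdiff_subset)),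
    hST.inter_eq, cutCount_empty, zero_add]

lemma cutCount_le_cutCount {S W : Set V} (hSW : S ⊆ W) (h : ¬ G.Linked S (W \ S)) :
    G.cutCount S ≤ G.cutCount W := by
  simp only [cutCount_eq_card]
  refine card_le_card fun e he => ?_
  obtain ⟨⟨a, ha, haS⟩, ⟨b, hb, hbS⟩⟩ := mem_edgesBetween.1 he
  exact mem_edgesBetween.2
    ⟨⟨a, ha, hSW haS⟩, ⟨b, hb, fun hbW => h ⟨e, ⟨a, ha, haS⟩, ⟨b, hb, hbW, hbS⟩⟩⟩⟩

lemma IsSaturated.cutCount_le {W A : Set V} (h : G.IsSaturated W A) (hA : A ⊆ W) :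
    G.cutCount A ≤ G.cutCount W :=
  cutCount_le_cutCount hA fun h' => h (h'.mono (Set.subset_inter subset_rfl hA) subset_rfl)

end Cuts

section Splits

variable (G) in
structure IsAdmissibleSplit (w : ℕ) (𝒲 : Set (Set V)) (X A B : Set V) : Prop where
  union_eq : A ∪ B = X
  disjoint : Disjoint A B
  nonempty_left : A.Nonempty
  nonempty_right : B.Nonempty
  saturated_left : ∀ W ∈ 𝒲, G.IsSaturated W A
  saturated_right : ∀ W ∈ 𝒲, G.IsSaturated W B
  cutCount_left_le : G.cutCount A ≤ w
  cutCount_right_le : G.cutCount B ≤ w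

variable {w : ℕ} {𝒲 : Set (Set V)} {X A B : Set V}

namespace IsAdmissibleSplit

lemma symm (s : G.IsAdmissibleSplit w 𝒲 X A B) : G.IsAdmissibleSplit w 𝒲 X B A where
  union_eq := Set.union_comm A B ▸ s.union_eq
  disjoint := s.disjoint.symm
  nonempty_left := s.nonempty_right
  nonempty_right := s.nonempty_left
  saturated_left := s.saturated_right
  saturated_right := s.saturated_left
  cutCount_left_le := s.cutCount_right_le
  cutCount_right_le := s.cutCount_left_le

lemma sdiff_left (s : G.IsAdmissibleSplit w 𝒲 X A B) : X \ A = B := by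
  rw [← s.union_eq, Set.union_sdiff_left, s.disjoint.symm.sdiff_eq_left]

variable [Fintype E]

lemma move {A₁ A₂ : Set V} (s : G.IsAdmissibleSplit w 𝒲 X A B) (hA : A₁ ∪ A₂ = A)
    (hd : Disjoint A₁ A₂) (hA₁ : A₁.Nonempty) (hl : ¬ G.Linked A₁ A₂)
    (hcut : G.cutCount (B ∪ A₂) ≤ w) : G.IsAdmissibleSplit w 𝒲 X A₁ (B ∪ A₂) where
  union_eq := by rw [← s.union_eq, ← hA]; ext; simp only [Set.mem_union]; tauto
  disjoint := Disjoint.union_right (s.disjoint.mono_left (hA ▸ Set.subset_union_left)) hd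
  nonempty_left := hA₁
  nonempty_right := s.nonempty_right.mono Set.subset_union_left
  saturated_left W hW := (hA ▸ s.saturated_left W hW).of_union_left hl
  saturated_right W hW := (s.saturated_right W hW).union
    ((Set.union_comm A₁ A₂ ▸ hA ▸ s.saturated_left W hW).of_union_left fun h => hl h.symm)
  cutCount_left_le := by
    have := s.cutCount_left_le
    rw [← hA, cutCount_union hd hl] at this
    omega
  cutCount_right_le := hcut

/-- One of the two moves is possible since `cut (B ∪ A₁) + cut (B ∪ A₂) = cut B + cut X ≤ 2 w`. -/
lemma exchange {A₁ A₂ : Set V} (s : G.IsAdmissibleSplit w 𝒲 X A B) (hX : G.cutCount X ≤ w)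
    (hA : A₁ ∪ A₂ = A) (hd : Disjoint A₁ A₂) (hA₁ : A₁.Nonempty) (hA₂ : A₂.Nonempty)
    (hl : ¬ G.Linked A₁ A₂) :
    G.IsAdmissibleSplit w 𝒲 X A₁ (B ∪ A₂) ∨ G.IsAdmissibleSplit w 𝒲 X A₂ (B ∪ A₁) := by
  have hdiff {C D : Set V} : (B ∪ C) \ (B ∪ D) ⊆ C := fun x hx =>
    hx.1.resolve_left fun hxB => hx.2 (.inl hxB)
  have hsum : G.cutCount (B ∪ A₁) + G.cutCount (B ∪ A₂) = G.cutCount B + G.cutCount X := by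
    rw [cutCount_add_cutCount fun h => hl (h.mono hdiff hdiff), ← Set.union_inter_distrib_left,
      hd.inter_eq, Set.union_empty, ← Set.union_union_distrib_left, hA, Set.union_comm,
      s.union_eq]
  by_cases hcut : G.cutCount (B ∪ A₂) ≤ w
  · exact .inl (s.move hA hd hA₁ hl hcut)
  · refine .inr (s.move (Set.union_comm A₁ A₂ ▸ hA) hd.symm hA₂ (fun h => hl h.symm) ?_)
    have := s.cutCount_right_le
    omega

variable [Finite V]

lemma exists_connectedOn_left (s : G.IsAdmissibleSplit w 𝒲 X A B) (hX : G.cutCount X ≤ w) :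
    ∃ A' B', G.IsAdmissibleSplit w 𝒲 X A' B' ∧ G.ConnectedOn A' := by
  induction hn : A.ncard using Nat.strong_induction_on generalizing A B with
  | _ n ih =>
  by_cases hA : G.ConnectedOn A
  · exact ⟨A, B, s, hA⟩
  obtain ⟨A₁, hA₁A, hA₁, hA₂, hl⟩ := exists_not_linked_of_not_connectedOn hA
  rcases s.exchange hX (Set.union_sdiff_cancel hA₁A) Set.disjoint_sdiff_right hA₁ hA₂ hl
    with s' | s'
  · exact ih _ (hn ▸ Set.ncard_lt_ncard (hA₁A.ssubset_of_not_subset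
      (Set.sdiff_nonempty.1 hA₂)) (Set.toFinite A)) s' rfl
  · exact ih _ (hn ▸ Set.ncard_lt_ncard (LE.le.sdiff_ssubset_of_nonempty hA₁A hA₁)
      (Set.toFinite A)) s' rfl

/-- Parts of `B` are moved into `A` one at a time; `A` stays connected because `X` is. -/
lemma exists_connectedOn_of_connectedOn_left (s : G.IsAdmissibleSplit w 𝒲 X A B)
    (hX : G.cutCount X ≤ w) (hXc : G.ConnectedOn X) (hA : G.ConnectedOn A) :
    ∃ A' B', G.IsAdmissibleSplit w 𝒲 X A' B' ∧ G.ConnectedOn A' ∧ G.ConnectedOn B' := by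
  induction hn : B.ncard using Nat.strong_induction_on generalizing A B with
  | _ n ih =>
  by_cases hB : G.ConnectedOn B
  · exact ⟨A, B, s, hA, hB⟩
  obtain ⟨B₁, hB₁B, hB₁, hB₂, hl⟩ := exists_not_linked_of_not_connectedOn hB
  rcases s.symm.exchange hX (Set.union_sdiff_cancel hB₁B) Set.disjoint_sdiff_right hB₁ hB₂ hl
    with s' | s'
  · have hX' : A ∪ (B \ B₁) ∪ B₁ = X := by
      rw [Set.union_assoc, Set.sdiff_union_of_subset hB₁B, s.union_eq]
    exact ih _ (hn ▸ Set.ncard_lt_ncard (hB₁B.ssubset_of_not_subset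
      (Set.sdiff_nonempty.1 hB₂)) (Set.toFinite B)) s'.symm
      ((hX' ▸ hXc).union_of_not_linked hA s.nonempty_left fun h => hl h.symm) rfl
  · have hX' : A ∪ B₁ ∪ (B \ B₁) = X := by
      rw [Set.union_assoc, Set.union_sdiff_cancel hB₁B, s.union_eq]
    exact ih _ (hn ▸ Set.ncard_lt_ncard (LE.le.sdiff_ssubset_of_nonempty hB₁B hB₁)
      (Set.toFinite B)) s'.symm ((hX' ▸ hXc).union_of_not_linked hA s.nonempty_left hl) rfl

lemma exists_connectedOn (s : G.IsAdmissibleSplit w 𝒲 X A B) (hX : G.cutCount X ≤ w)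
    (hXc : G.ConnectedOn X) :
    ∃ A' B', G.IsAdmissibleSplit w 𝒲 X A' B' ∧ G.ConnectedOn A' ∧ G.ConnectedOn B' :=
  let ⟨_, _, s', hA'⟩ := s.exists_connectedOn_left hX
  s'.exists_connectedOn_of_connectedOn_left hX hXc hA'

end IsAdmissibleSplit

end Splits

section Halves

variable [Fintype E] {w : ℕ} {Vₗ Vᵣ : Set V}

/-- An edge leaving a saturated part `A` of `X` must join `Vₗ` to `Vᵣ`, and it no longer
lies inside `A`. -/
lemma card_edgesBetween_inter_lt {X A : Set V} (hd : Disjoint Vₗ Vᵣ) (hX : X ⊆ Vₗ ∪ Vᵣ)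
    (hAX : A ⊆ X) (hₗ : G.IsSaturated Vₗ A) (hᵣ : G.IsSaturated Vᵣ A) (hl : G.Linked A (X \ A)) :
    #(G.edgesBetween (A ∩ Vₗ) (A ∩ Vᵣ)) < #(G.edgesBetween (X ∩ Vₗ) (X ∩ Vᵣ)) := by
  obtain ⟨e, ⟨a, ha, haA⟩, ⟨b, hb, hbX, hbA⟩⟩ := hl
  have he : e ∈ G.edgesBetween (X ∩ Vₗ) (X ∩ Vᵣ) := by
    rcases hX (hAX haA) with haₗ | haᵣ
    · have hbᵣ : b ∈ Vᵣ := (hX hbX).resolve_left fun hbₗ =>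
        hₗ ⟨e, ⟨a, ha, haA, haₗ⟩, ⟨b, hb, hbₗ, hbA⟩⟩
      exact mem_edgesBetween.2 ⟨⟨a, ha, hAX haA, haₗ⟩, ⟨b, hb, hbX, hbᵣ⟩⟩
    · have hbₗ : b ∈ Vₗ := (hX hbX).resolve_right fun hbᵣ =>
        hᵣ ⟨e, ⟨a, ha, haA, haᵣ⟩, ⟨b, hb, hbᵣ, hbA⟩⟩
      exact mem_edgesBetween.2 ⟨⟨b, hb, hbX, hbₗ⟩, ⟨a, ha, hAX haA, haᵣ⟩⟩
  have hends : G.ends e = s(a, b) :=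
    (Sym2.mem_and_mem_iff fun (hab : a = b) => hbA (hab ▸ haA)).1 ⟨ha, hb⟩
  refine card_lt_card ((ssubset_iff_of_subset (edgesBetween_mono
    (Set.inter_subset_inter_left _ hAX) (Set.inter_subset_inter_left _ hAX))).2 ⟨e, he, ?_⟩)
  rw [mem_edgesBetween, hends]
  rintro ⟨⟨c, hc, hcA, hcₗ⟩, ⟨d, hd', hdA, hdᵣ⟩⟩
  rw [Sym2.mem_iff] at hc hd'
  obtain rfl : c = a := hc.resolve_right fun h => hbA (h ▸ hcA)
  obtain rfl : d = c := hd'.resolve_right fun h => hbA (h ▸ hdA)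
  exact hd.notMem_of_mem_left hcₗ hdᵣ

lemma isAdmissibleSplit_inter {X : Set V} (hd : Disjoint Vₗ Vᵣ) (hwₗ : G.cutCount Vₗ ≤ w)
    (hwᵣ : G.cutCount Vᵣ ≤ w) (hX : X ⊆ Vₗ ∪ Vᵣ) (hₗ : G.IsSaturated Vₗ X)
    (hᵣ : G.IsSaturated Vᵣ X) (hXₗ : ¬ X ⊆ Vₗ) (hXᵣ : ¬ X ⊆ Vᵣ) :
    G.IsAdmissibleSplit w {Vₗ, Vᵣ} X (X ∩ Vₗ) (X ∩ Vᵣ) where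
  union_eq := by rw [← Set.inter_union_distrib_left, Set.inter_eq_left.2 hX]
  disjoint := hd.mono Set.inter_subset_right Set.inter_subset_right
  nonempty_left :=
    let ⟨x, hxX, hxᵣ⟩ := Set.not_subset.1 hXᵣ
    ⟨x, hxX, (hX hxX).resolve_right hxᵣ⟩
  nonempty_right :=
    let ⟨x, hxX, hxₗ⟩ := Set.not_subset.1 hXₗ
    ⟨x, hxX, (hX hxX).resolve_left hxₗ⟩
  saturated_left := by
    rintro W (rfl | rfl)
    exacts [hₗ.inter, isSaturated_of_disjoint (hd.mono_left Set.inter_subset_right)]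
  saturated_right := by
    rintro W (rfl | rfl)
    exacts [isSaturated_of_disjoint (hd.symm.mono_left Set.inter_subset_right), hᵣ.inter]
  cutCount_left_le := (hₗ.inter.cutCount_le Set.inter_subset_right).trans hwₗ
  cutCount_right_le := (hᵣ.inter.cutCount_le Set.inter_subset_right).trans hwᵣ

end Halves

end Multigraph

namespace BTree

variable {α : Type}

@[simp] lemma leafSet_leaf (a : α) : (leaf a).leafSet = {a} := by
  ext; simp [leafSet, leaves]

@[simp] lemma leafSet_node (l r : BTree α) : (node l r).leafSet = l.leafSet ∪ r.leafSet := by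
  ext; simp [leafSet, leaves]

lemma self_mem_subtrees (t : BTree α) : t ∈ t.subtrees := by
  cases t <;> simp [subtrees]

@[simp] lemma mem_subtrees_node {s l r : BTree α} :
    s ∈ (node l r).subtrees ↔ s = node l r ∨ s ∈ l.subtrees ∨ s ∈ r.subtrees := by
  simp [subtrees]

lemma nodup_leaves_node {l r : BTree α} :
    (node l r).leaves.Nodup ↔ l.leaves.Nodup ∧ r.leaves.Nodup ∧ Disjoint l.leafSet r.leafSet := by
  simp only [leaves, List.nodup_append, Set.disjoint_left, leafSet, Set.mem_ofPred_eq]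
  grind

end BTree

section Carving

variable {V E : Type} {G : Multigraph V E} {w : ℕ}

lemma carvWidthLE_node {l r : BTree V} :
    CarvWidthLE G (.node l r) w ↔
      G.cutCount (l.leafSet ∪ r.leafSet) ≤ w ∧ CarvWidthLE G l w ∧ CarvWidthLE G r w := by
  simp only [CarvWidthLE, BTree.mem_subtrees_node, or_imp, forall_and, forall_eq,
    BTree.leafSet_node]

lemma contractive_node {l r : BTree V} :
    Contractive G (.node l r) ↔
      G.Linked l.leafSet r.leafSet ∧ Contractive G l ∧ Contractive G r := by
  simp [Contractive, or_imp, forall_and, Multigraph.Linked]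

variable (G w) in
structure IsContractiveCarving (S : Set V) (t : BTree V) : Prop where
  leafSet_eq : t.leafSet = S
  nodup : t.leaves.Nodup
  contractive : Contractive G t
  width_le : CarvWidthLE G t w

namespace IsContractiveCarving

lemma leaf {v : V} (h : G.cutCount {v} ≤ w) : IsContractiveCarving G w {v} (.leaf v) where
  leafSet_eq := BTree.leafSet_leaf v
  nodup := List.nodup_singleton v
  contractive := by simp [Contractive, BTree.subtrees]
  width_le := by simpa [CarvWidthLE, BTree.subtrees] using h

lemma node {A B : Set V} {t₁ t₂ : BTree V} (h₁ : IsContractiveCarving G w A t₁)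
    (h₂ : IsContractiveCarving G w B t₂) (hd : Disjoint A B) (hl : G.Linked A B)
    (hcut : G.cutCount (A ∪ B) ≤ w) : IsContractiveCarving G w (A ∪ B) (.node t₁ t₂) := by
  obtain ⟨rfl, hn₁, hc₁, hw₁⟩ := h₁
  obtain ⟨rfl, hn₂, hc₂, hw₂⟩ := h₂
  exact ⟨BTree.leafSet_node t₁ t₂, BTree.nodup_leaves_node.2 ⟨hn₁, hn₂, hd⟩,
    contractive_node.2 ⟨hl, hc₁, hc₂⟩, carvWidthLE_node.2 ⟨hcut, hw₁, hw₂⟩⟩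

end IsContractiveCarving

open Multigraph

variable [Finite V] [Fintype E]

theorem exists_isContractiveCarving_of_subset_union {Vₗ Vᵣ : Set V} (k : ℕ)
    (hd : Disjoint Vₗ Vᵣ) (hwₗ : G.cutCount Vₗ ≤ w) (hwᵣ : G.cutCount Vᵣ ≤ w)
    (ihₗ : ∀ X ⊆ Vₗ, X.Nonempty → G.ConnectedOn X → G.IsSaturated Vₗ X →
      ∃ t, IsContractiveCarving G w X t ∧ t.height ≤ k)
    (ihᵣ : ∀ X ⊆ Vᵣ, X.Nonempty → G.ConnectedOn X → G.IsSaturated Vᵣ X →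
      ∃ t, IsContractiveCarving G w X t ∧ t.height ≤ k)
    {X : Set V} (hX : X ⊆ Vₗ ∪ Vᵣ) (hne : X.Nonempty) (hc : G.ConnectedOn X)
    (hₗ : G.IsSaturated Vₗ X) (hᵣ : G.IsSaturated Vᵣ X) (hcut : G.cutCount X ≤ w) :
    ∃ t, IsContractiveCarving G w X t ∧
      t.height ≤ #(G.edgesBetween (X ∩ Vₗ) (X ∩ Vᵣ)) + k := by
  induction hn : #(G.edgesBetween (X ∩ Vₗ) (X ∩ Vᵣ)) using Nat.strong_induction_on
    generalizing X with
  | _ n ih =>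
  by_cases hXₗ : X ⊆ Vₗ
  · obtain ⟨t, ht, hh⟩ := ihₗ X hXₗ hne hc hₗ
    exact ⟨t, ht, hh.trans (Nat.le_add_left k n)⟩
  by_cases hXᵣ : X ⊆ Vᵣ
  · obtain ⟨t, ht, hh⟩ := ihᵣ X hXᵣ hne hc hᵣ
    exact ⟨t, ht, hh.trans (Nat.le_add_left k n)⟩
  obtain ⟨A, B, s, hA, hB⟩ :=
    (isAdmissibleSplit_inter hd hwₗ hwᵣ hX hₗ hᵣ hXₗ hXᵣ).exists_connectedOn hcut hc
  have hAX : A ⊆ X := s.union_eq ▸ Set.subset_union_left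
  have hBX : B ⊆ X := s.union_eq ▸ Set.subset_union_right
  have hAB : G.Linked A B :=
    s.sdiff_left ▸ hc A hAX s.nonempty_left (s.sdiff_left ▸ s.nonempty_right)
  have hₗA := s.saturated_left Vₗ (by simp)
  have hᵣA := s.saturated_left Vᵣ (by simp)
  have hₗB := s.saturated_right Vₗ (by simp)
  have hᵣB := s.saturated_right Vᵣ (by simp)
  have hltA := card_edgesBetween_inter_lt hd hX hAX hₗA hᵣA (s.sdiff_left ▸ hAB)
  have hltB := card_edgesBetween_inter_lt hd hX hBX hₗB hᵣB (s.symm.sdiff_left ▸ hAB.symm)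
  obtain ⟨tA, htA, hhA⟩ := ih _ (hn ▸ hltA) (hAX.trans hX) s.nonempty_left hA hₗA hᵣA
    s.cutCount_left_le rfl
  obtain ⟨tB, htB, hhB⟩ := ih _ (hn ▸ hltB) (hBX.trans hX) s.nonempty_right hB hₗB hᵣB
    s.cutCount_right_le rfl
  refine ⟨.node tA tB, s.union_eq ▸ htA.node htB s.disjoint hAB (s.union_eq ▸ hcut), ?_⟩
  simp only [BTree.height]
  omega

theorem exists_isContractiveCarving (u : BTree V) (hu : u.leaves.Nodup) (hw : CarvWidthLE G u w)
    {S : Set V} (hS : S ⊆ u.leafSet) (hne : S.Nonempty) (hc : G.ConnectedOn S)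
    (hsat : G.IsSaturated u.leafSet S) :
    ∃ t, IsContractiveCarving G w S t ∧ t.height ≤ w * u.height := by
  induction u generalizing S with
  | leaf v =>
    obtain rfl : S = {v} := (Set.Nonempty.subset_singleton_iff hne).1 (by simpa using hS)
    exact ⟨.leaf v, .leaf (by simpa using hw _ (BTree.self_mem_subtrees _)), by simp [BTree.height]⟩
  | node l r ihₗ ihᵣ =>
    obtain ⟨hluₗ, hluᵣ, hd⟩ := BTree.nodup_leaves_node.1 hu
    obtain ⟨hw', hwₗ, hwᵣ⟩ := carvWidthLE_node.1 hw
    rw [BTree.leafSet_node] at hS hsat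
    obtain ⟨t, ht, hh⟩ := exists_isContractiveCarving_of_subset_union (w * max l.height r.height)
      hd (hwₗ _ (BTree.self_mem_subtrees l)) (hwᵣ _ (BTree.self_mem_subtrees r))
      (fun X hX hne hc hsat => (ihₗ hluₗ hwₗ hX hne hc hsat).imp fun _ ⟨ht, hh⟩ =>
        ⟨ht, hh.trans (Nat.mul_le_mul_left w (le_max_left _ _))⟩)
      (fun X hX hne hc hsat => (ihᵣ hluᵣ hwᵣ hX hne hc hsat).imp fun _ ⟨ht, hh⟩ =>
        ⟨ht, hh.trans (Nat.mul_le_mul_left w (le_max_right _ _))⟩)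
      hS hne hc (hsat.mono Set.subset_union_left) (hsat.mono Set.subset_union_right)
      ((hsat.cutCount_le hS).trans hw')
    have hcross : #(G.edgesBetween (S ∩ l.leafSet) (S ∩ r.leafSet)) ≤ w :=
      (cutCount_eq_card (G := G) l.leafSet ▸ card_le_card (edgesBetween_mono
        Set.inter_subset_right (Set.inter_subset_right.trans hd.subset_compl_left))).trans
        (hwₗ _ (BTree.self_mem_subtrees l))
    refine ⟨t, ht, hh.trans ?_⟩
    simp only [BTree.height]
    rw [Nat.mul_succ]
    omega

end Carving

/-- Let `G` be a connected multigraph and `(T,γ)` a rooted carving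
decomposition of `G` of width at most `w` and height at most `h`. Then `G` has a
contractive rooted carving decomposition of width at most `w` and height at most `w·h`. -/
theorem statement_1 {V E : Type} [Fintype V] [Fintype E]
    (G : Multigraph V E) (hG : G.Connected)
    (T : BTree V) (hT : IsCarvingDecomp G T)
    (w h : ℕ) (hw : CarvWidthLE G T w) (hh : T.height ≤ h) :
    ∃ T' : BTree V, IsCarvingDecomp G T' ∧ Contractive G T' ∧
      CarvWidthLE G T' w ∧ T'.height ≤ w * h := by
  obtain ⟨hnodup, hall⟩ := hT
  have : Nonempty V := hG.1
  obtain ⟨t, ht, hth⟩ := exists_isContractiveCarving T hnodup hw (fun v _ => hall v)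
    Set.univ_nonempty hG.connectedOn_univ (by simp [Multigraph.IsSaturated, Multigraph.Linked])
  refine ⟨t, ⟨ht.nodup, fun v => ?_⟩, ht.contractive, ht.width_le,
    hth.trans (Nat.mul_le_mul_left w hh)⟩
  change v ∈ t.leafSet
  simp [ht.leafSet_eq]
end

section
/- Let G be a connected simple graph on a finite vertex type V and let S be a nonempty proper subset of V. Then the number of connected components of the subgraph of G induced on S is at most the number of edges of G having exactly one endpoint in S. -/
lemma aux_boundary {V : Type} (G : SimpleGraph V) (S : Set V) :
    ∀ {v w : V} (_ : G.Walk v w) (hv : v ∈ S) (_ : w ∉ S),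
      ∃ (a : S) (b : V), G.Adj a b ∧ b ∉ S ∧ (G.induce S).Reachable ⟨v, hv⟩ a := by
  intro v w p
  induction p with
  | nil => intro hv hw; exact absurd hv hw
  | @cons v u w h p ih =>
    intro hv hw
    by_cases hu : u ∈ S
    · obtain ⟨a, b, hab, hb, hr⟩ := ih hu hw
      have hadj : (G.induce S).Adj ⟨v, hv⟩ ⟨u, hu⟩ := by simpa using h
      exact ⟨a, b, hab, hb, hadj.reachable.trans hr⟩
    · exact ⟨⟨v, hv⟩, u, h, hu, SimpleGraph.Reachable.refl _⟩

/-- Let `G` be a connected simple graph on a finite vertex type `V`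
and let `S` be a nonempty proper subset of `V`. Then the number of connected
components of the subgraph of `G` induced on `S` is at most the number of edges of
`G` having exactly one endpoint in `S`. -/
theorem statement_3 {V : Type} [Fintype V] (G : SimpleGraph V) (hG : G.Connected)
    (S : Set V) (hS : S.Nonempty) (hS' : S ≠ Set.univ) :
    Nat.card (G.induce S).ConnectedComponent ≤
      Nat.card {e : Sym2 V // e ∈ G.edgeSet ∧ ∃ a b : V, e = s(a, b) ∧ a ∈ S ∧ b ∉ S} := by
  classical
  obtain ⟨w, hw⟩ : ∃ w, w ∉ S := by
    by_contra h
    push_neg at h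
    exact hS' (Set.eq_univ_of_forall h)
  have key : ∀ c : (G.induce S).ConnectedComponent,
      ∃ e : Sym2 V, (e ∈ G.edgeSet ∧ ∃ a b : V, e = s(a, b) ∧ a ∈ S ∧ b ∉ S) ∧
        ∀ (a : S) (b : V), e = s(a.1, b) → b ∉ S →
          (G.induce S).connectedComponentMk a = c := by
    intro c
    obtain ⟨v, hv⟩ := c.exists_rep
    obtain ⟨a, b, hab, hb, hr⟩ :=
      aux_boundary G S ((hG.preconnected v.1 w).some) v.2 hw
    refine ⟨s(a.1, b), ⟨hab, a.1, b, rfl, a.2, hb⟩, ?_⟩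
    intro a' b' he hb'
    have : a'.1 = a.1 := by
      rw [Sym2.eq_iff] at he
      rcases he with ⟨h1, _⟩ | ⟨h1, h2⟩
      · exact h1.symm
      · exact absurd (show b ∈ S from h2 ▸ a'.2) hb
    have ha' : a' = a := Subtype.ext this
    subst ha'
    rw [← hv]
    exact (SimpleGraph.ConnectedComponent.sound hr.symm).trans
      (congrArg _ rfl)
  choose f hf1 hf2 using key
  have hinj : Function.Injective
      (fun c => (⟨f c, hf1 c⟩ : {e : Sym2 V // e ∈ G.edgeSet ∧
        ∃ a b : V, e = s(a, b) ∧ a ∈ S ∧ b ∉ S})) := by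
    intro c1 c2 h
    have he : f c1 = f c2 := congrArg Subtype.val h
    obtain ⟨_, a, b, hab, ha, hb⟩ := hf1 c1
    have h1 := hf2 c1 ⟨a, ha⟩ b hab hb
    have h2 := hf2 c2 ⟨a, ha⟩ b (he ▸ hab) hb
    rw [← h1, ← h2]
  exact Nat.card_le_card_of_injective _ hinj
end

section
/- Let 𝓘 : Fin m → Finset ℕ be an abstract network and let (T,γ) be a contractive rooted carving decomposition of its graph G(𝓘) of width w and height h. Define ι on the nodes of T by ι(u) = 𝓘(γ(u)) for every leaf u and ι(u) = ι(u.l) Δ ι(u.r) for every internal node u with children u.l and u.r. Then (T,ι) is a contraction tree for 𝓘 of height h (in particular, ι(u.l) ∩ ι(u.r) ≠ ∅ for every internal node u), for every node u of T one has |ι(u)| = |E(V[u], V∖V[u])| in G(𝓘), and the rank of (T,ι) equals the width of (T,γ); in particular the rank of (T,ι) is at most w. -/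
/-- The rank of the contraction tree `(T, ι)`: the maximum of `|ι(u)|` over nodes `u`. -/
def rankOf {m : ℕ} (I : Fin m → Finset ℕ) (T : BTree (Fin m)) : ℕ :=
  (T.subtrees.map fun u => (iota I u).card).foldr max 0

/-- The width of the carving decomposition `(T, γ)` of `G`:
the maximum of `|E(V[u], V∖V[u])|` over nodes `u`. -/
noncomputable def carvWidth {V E : Type} (G : Multigraph V E) (T : BTree V) : ℕ :=
  (T.subtrees.map fun u => G.cutCount u.leafSet).foldr max 0

/-!
An edge `e` of `G(I)` with ends `a ≠ b` carries the index `idx e`, which lies in exactly the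
two sets `I a` and `I b`. Since `ι(u)` is the symmetric difference of the `I j` over the
leaves `j` of `u`, an index lies in `ι(u)` iff it occurs in an odd number of them, i.e. iff
exactly one of `a`, `b` is a leaf of `u`, i.e. iff `e` crosses the cut `(V[u], V ∖ V[u])`.
So `idx` is a bijection from the cut onto `ι(u)`, which gives `|ι(u)| = |E(V[u], V ∖ V[u])|`
and hence rank = width; an edge between `V[u.l]` and `V[u.r]` crosses both cuts, so its index
lies in `ι(u.l) ∩ ι(u.r)`.
-/

lemma BTree.leaves_sublist_of_mem_subtrees {α : Type} {T u : BTree α}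
    (hu : u ∈ T.subtrees) : u.leaves.Sublist T.leaves := by
  induction T with
  | leaf a =>
    obtain rfl : u = .leaf a := by simpa [BTree.subtrees] using hu
    exact List.Sublist.refl _
  | node l r ihl ihr =>
    simp only [BTree.subtrees, List.mem_cons, List.mem_append] at hu
    rcases hu with rfl | hl | hr
    · exact List.Sublist.refl _
    · exact (ihl hl).trans (List.sublist_append_left _ _)
    · exact (ihr hr).trans (List.sublist_append_right _ _)

lemma List.odd_countP_mem_sym2_iff {V : Type} [DecidableEq V] {z : Sym2 V} (hz : ¬ z.IsDiag)
    {l : List V} (hl : l.Nodup) :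
    Odd (l.countP (· ∈ z)) ↔ (∃ a ∈ z, a ∈ l) ∧ (∃ a ∈ z, a ∉ l) := by
  induction z using Sym2.ind with
  | _ a b =>
    have hab : a ≠ b := by simpa using hz
    have hcount : l.countP (· ∈ s(a, b)) = l.count a + l.count b := by
      clear hl
      induction l with
      | nil => rfl
      | cons x l ih =>
        rw [List.countP_cons, List.count_cons, List.count_cons, ih]
        by_cases hxa : x = a <;> by_cases hxb : x = b <;> simp_all <;> omega
    have hcount_of_nodup : ∀ x, l.count x = if x ∈ l then 1 else 0 := fun x => by
      split_ifs with hx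
      exacts [List.count_eq_one_of_mem hl hx, List.count_eq_zero.mpr hx]
    rw [hcount, hcount_of_nodup, hcount_of_nodup]
    simp only [Sym2.mem_iff, exists_eq_or_imp, exists_eq_left]
    by_cases ha : a ∈ l <;> by_cases hb : b ∈ l <;> simp [ha, hb]

section iota

variable {m : ℕ} (I : Fin m → Finset ℕ)

lemma mem_iota_iff_odd_countP (u : BTree (Fin m)) (i : ℕ) :
    i ∈ iota I u ↔ Odd (u.leaves.countP (fun j => i ∈ I j)) := by
  induction u with
  | leaf j => by_cases h : i ∈ I j <;> simp [iota, BTree.leaves, h]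
  | node l r ihl ihr =>
    simp only [iota, BTree.leaves, List.countP_append, Finset.mem_symmDiff, ihl, ihr,
      Nat.odd_add, ← Nat.not_odd_iff_even]
    tauto

lemma exists_mem_leaves_of_mem_iota {u : BTree (Fin m)} {i : ℕ} (hi : i ∈ iota I u) :
    ∃ j ∈ u.leaves, i ∈ I j := by
  have hpos := ((mem_iota_iff_odd_countP I u i).mp hi).pos
  simpa using List.countP_pos_iff.mp hpos

end iota

namespace IsNetworkGraph

variable {m : ℕ} {E : Type} {I : Fin m → Finset ℕ} {G : Multigraph (Fin m) E} {idx : E → ℕ}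

lemma mem_iota_iff_crosses (hG : IsNetworkGraph I G idx) {u : BTree (Fin m)}
    (hu : u.leaves.Nodup) (e : E) :
    idx e ∈ iota I u ↔ (∃ a ∈ G.ends e, a ∈ u.leafSet) ∧ (∃ a ∈ G.ends e, a ∉ u.leafSet) := by
  have hends : (fun j => decide (idx e ∈ I j)) = fun j => decide (j ∈ G.ends e) := by
    funext j
    exact decide_eq_decide.mpr (hG.2.2 e j).symm
  rw [mem_iota_iff_odd_countP, hends]
  exact List.odd_countP_mem_sym2_iff (G.no_loops e) hu

lemma card_iota_eq_cutCount (hG : IsNetworkGraph I G idx) {u : BTree (Fin m)}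
    (hu : u.leaves.Nodup) : (iota I u).card = G.cutCount u.leafSet := by
  let toIndex : {e : E // (∃ a ∈ G.ends e, a ∈ u.leafSet) ∧ (∃ a ∈ G.ends e, a ∉ u.leafSet)} →
      iota I u := fun e => ⟨idx e, (hG.mem_iota_iff_crosses hu e).mpr e.2⟩
  have hbij : Function.Bijective toIndex := by
    refine ⟨fun e e' h => Subtype.ext (hG.1 (congrArg Subtype.val h)), fun ⟨i, hi⟩ => ?_⟩
    obtain ⟨j, -, hij⟩ := exists_mem_leaves_of_mem_iota I hi
    obtain ⟨e, rfl⟩ := hG.2.1 i ⟨j, hij⟩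
    exact ⟨⟨e, (hG.mem_iota_iff_crosses hu e).mp hi⟩, rfl⟩
  rw [Multigraph.cutCount, Nat.card_congr (Equiv.ofBijective toIndex hbij),
    Nat.card_eq_finsetCard]

lemma inter_iota_nonempty (hG : IsNetworkGraph I G idx) {l r : BTree (Fin m)}
    (hlr : (BTree.node l r).leaves.Nodup)
    (hedge : ∃ e : E, (∃ a ∈ G.ends e, a ∈ l.leafSet) ∧ (∃ a ∈ G.ends e, a ∈ r.leafSet)) :
    (iota I l ∩ iota I r).Nonempty := by
  obtain ⟨e, ⟨a, hae, hal⟩, ⟨b, hbe, hbr⟩⟩ := hedge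
  obtain ⟨hl, hr, hdisj⟩ := List.nodup_append.mp hlr
  refine ⟨idx e, Finset.mem_inter.mpr ⟨?_, ?_⟩⟩
  · exact (hG.mem_iota_iff_crosses hl e).mpr
      ⟨⟨a, hae, hal⟩, ⟨b, hbe, fun hbl => hdisj b hbl b hbr rfl⟩⟩
  · exact (hG.mem_iota_iff_crosses hr e).mpr
      ⟨⟨b, hbe, hbr⟩, ⟨a, hae, fun har => hdisj a hal a har rfl⟩⟩

end IsNetworkGraph

theorem statement_7_general {m : ℕ} {E : Type}
    (I : Fin m → Finset ℕ)
    (G : Multigraph (Fin m) E) (idx : E → ℕ) (hG : IsNetworkGraph I G idx)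
    (T : BTree (Fin m)) (hT : IsCarvingDecomp G T) (hcontr : Contractive G T)
    (w h : ℕ) (hw : carvWidth G T = w) (hh : T.height = h) :
    IsContractionTree I T ∧ T.height = h ∧
    (∀ u ∈ T.subtrees, (iota I u).card = G.cutCount u.leafSet) ∧
    rankOf I T = carvWidth G T ∧ rankOf I T ≤ w := by
  obtain ⟨hnodup, hall⟩ := hT
  have hnodup_sub : ∀ u ∈ T.subtrees, u.leaves.Nodup := fun u hu =>
    (BTree.leaves_sublist_of_mem_subtrees hu).nodup hnodup
  have hcard : ∀ u ∈ T.subtrees, (iota I u).card = G.cutCount u.leafSet := fun u hu =>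
    hG.card_iota_eq_cutCount (hnodup_sub u hu)
  have hrank : rankOf I T = carvWidth G T := by
    rw [rankOf, carvWidth, List.map_congr_left hcard]
  exact ⟨⟨hnodup, hall, fun l r hlr => hG.inter_iota_nonempty (hnodup_sub _ hlr) (hcontr l r hlr)⟩,
    hh, hcard, hrank, hw ▸ hrank.le⟩

/-- Let `I` be an abstract network and `(T,γ)` a contractive rooted
carving decomposition of its graph `G(I)` of width `w` and height `h`. With
`ι(u) = I(γ(u))` at leaves and `ι(u) = ι(u.l) Δ ι(u.r)` at internal nodes, `(T,ι)`
is a contraction tree for `I` of height `h`, `|ι(u)| = |E(V[u], V∖V[u])|` for every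
node `u`, and the rank of `(T,ι)` equals the width of `(T,γ)`; in particular the
rank is at most `w`. -/
theorem statement_7 {m : ℕ} {E : Type} [Fintype E]
    (I : Fin m → Finset ℕ) (hnet : IsAbstractNetwork I)
    (G : Multigraph (Fin m) E) (idx : E → ℕ) (hG : IsNetworkGraph I G idx)
    (T : BTree (Fin m)) (hT : IsCarvingDecomp G T) (hcontr : Contractive G T)
    (w h : ℕ) (hw : carvWidth G T = w) (hh : T.height = h) :
    IsContractionTree I T ∧ T.height = h ∧
    (∀ u ∈ T.subtrees, (iota I u).card = G.cutCount u.leafSet) ∧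
    rankOf I T = carvWidth G T ∧ rankOf I T ≤ w :=
  statement_7_general I G idx hG T hT hcontr w h hw hh
end

section
/- Let d, r ≥ 1 and h ≥ 0 be integers and let ε ≥ 0 be a real number with ε·(3·d^{2r}+1)^h ≤ 1. Let K, J, L ⊆ ℕ be pairwise disjoint finite sets with L nonempty, |K ∪ L| ≤ r and |J ∪ L| ≤ r. Let g1, g1' be d-state tensors with index set K ∪ L and g2, g2' be d-state tensors with index set J ∪ L such that every entry of g1 and every entry of g2 has modulus at most 1, ‖g1 − g1'‖ ≤ ε·(3·d^{2r}+1)^h and ‖g2 − g2'‖ ≤ ε·(3·d^{2r}+1)^h. Then every d-state tensor t with index set K ∪ J satisfying ‖t − Contr(g1,g2)‖ ≤ ε also satisfies ‖t − Contr(g1',g2')‖ ≤ ε·(3·d^{2r}+1)^{h+1}. -/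
/-!
Each summand of the contraction satisfies
`g1 g2 - g1' g2' = g1 (g2 - g2') + (g1 - g1') g2'`, and `‖g2'‖ ≤ 1 + E ≤ 2` with
`E = ε (3 d^(2r) + 1)^h`, so it moves by at most `3E`. There are `d^(2|L|) ≤ d^(2r)` summands,
and `t` is within `ε ≤ E` of the old contraction, so the total error is at most
`E (1 + 3 d^(2r)) = ε (3 d^(2r) + 1)^(h+1)`.
-/

/-- The norm of a tensor (a complex-valued array): the supremum of the moduli of its entries. -/
noncomputable def tnorm {α : Type} (g : α → ℂ) : ℝ := ⨆ σ : α, ‖g σ‖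

/-- Glue an assignment `τ` on `K ∪ J` with an assignment `σ` on `L` into an
assignment on `K ∪ L` (agreeing with `τ` on `K` and with `σ` on `L`). -/
def glue {d : ℕ} {K J L : Finset ℕ} (τ : ↥(K ∪ J) → Fin d × Fin d)
    (σ : ↥L → Fin d × Fin d) (x : ↥(K ∪ L)) : Fin d × Fin d :=
  if h : (x : ℕ) ∈ K then τ ⟨(x : ℕ), Finset.mem_union_left _ h⟩
  else σ ⟨(x : ℕ), (Finset.mem_union.mp x.2).resolve_left h⟩

/-- The contraction of a `d`-state tensor `g` with index set `K ∪ L` and a `d`-state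
tensor `g'` with index set `J ∪ L` (for `K, J, L` pairwise disjoint), summing over
the shared indices `L`; the result has index set `K ∪ J`. -/
noncomputable def Contr {d : ℕ} (K J L : Finset ℕ)
    (g : (↥(K ∪ L) → Fin d × Fin d) → ℂ)
    (g' : (↥(J ∪ L) → Fin d × Fin d) → ℂ)
    (τ : ↥(K ∪ J) → Fin d × Fin d) : ℂ :=
  ∑ σ : ↥L → Fin d × Fin d,
    g (glue τ σ) *
    g' (glue (fun x : ↥(J ∪ K) =>
          τ ⟨(x : ℕ), Finset.mem_union.mpr (Finset.mem_union.mp x.2).symm⟩) σ)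

open Finset

lemma norm_le_tnorm {α : Type} [Finite α] (g : α → ℂ) (σ : α) : ‖g σ‖ ≤ tnorm g :=
  le_ciSup (f := fun σ => ‖g σ‖) (Set.finite_range _).bddAbove σ

lemma tnorm_le {α : Type} {g : α → ℂ} {c : ℝ} (hc : 0 ≤ c) (h : ∀ σ, ‖g σ‖ ≤ c) : tnorm g ≤ c :=
  Real.iSup_le h hc

lemma norm_mul_sub_mul_le_three_mul {R : Type*} [NormedRing R] {a a' b b' : R} {E : ℝ}
    (hE : E ≤ 1) (ha : ‖a‖ ≤ 1) (hb : ‖b‖ ≤ 1) (haa' : ‖a - a'‖ ≤ E) (hbb' : ‖b - b'‖ ≤ E) :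
    ‖a * b - a' * b'‖ ≤ 3 * E := by
  have hb' : ‖b'‖ ≤ 2 := by linarith [norm_le_norm_add_norm_sub b b']
  have hE0 : 0 ≤ E := (norm_nonneg _).trans haa'
  calc ‖a * b - a' * b'‖ = ‖a * (b - b') + (a - a') * b'‖ := by noncomm_ring
    _ ≤ ‖a‖ * ‖b - b'‖ + ‖a - a'‖ * ‖b'‖ :=
      (norm_add_le _ _).trans (add_le_add (norm_mul_le _ _) (norm_mul_le _ _))
    _ ≤ 1 * E + E * 2 := by gcongr
    _ = 3 * E := by ring

lemma card_assignments (d : ℕ) (L : Finset ℕ) :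
    Fintype.card (↥L → Fin d × Fin d) = d ^ (2 * #L) := by
  rw [Fintype.card_fun, Fintype.card_prod, Fintype.card_fin, Fintype.card_coe, pow_mul, sq]

lemma norm_contr_sub_contr_le {d : ℕ} {K J L : Finset ℕ} {E : ℝ} (hE : E ≤ 1)
    {g1 g1' : (↥(K ∪ L) → Fin d × Fin d) → ℂ} {g2 g2' : (↥(J ∪ L) → Fin d × Fin d) → ℂ}
    (hb1 : ∀ σ, ‖g1 σ‖ ≤ 1) (hb2 : ∀ σ, ‖g2 σ‖ ≤ 1)
    (h1 : ∀ σ, ‖g1 σ - g1' σ‖ ≤ E) (h2 : ∀ σ, ‖g2 σ - g2' σ‖ ≤ E)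
    (τ : ↥(K ∪ J) → Fin d × Fin d) :
    ‖Contr K J L g1 g2 τ - Contr K J L g1' g2' τ‖ ≤ d ^ (2 * #L) * (3 * E) := by
  rw [Contr, Contr, ← sum_sub_distrib]
  refine (norm_sum_le _ _).trans ?_
  refine (sum_le_sum fun σ _ =>
    norm_mul_sub_mul_le_three_mul hE (hb1 _) (hb2 _) (h1 _) (h2 _)).trans_eq ?_
  rw [sum_const, card_univ, card_assignments, nsmul_eq_mul]
  push_cast
  ring

theorem statement_9_general (d r h : ℕ) (hd : 1 ≤ d) (ε : ℝ) (hε0 : 0 ≤ ε)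
    (hsmall : ε * (3 * (d : ℝ) ^ (2 * r) + 1) ^ h ≤ 1)
    (K J L : Finset ℕ)
    (hKr : (K ∪ L).card ≤ r)
    (g1 g1' : (↥(K ∪ L) → Fin d × Fin d) → ℂ)
    (g2 g2' : (↥(J ∪ L) → Fin d × Fin d) → ℂ)
    (hb1 : ∀ σ, ‖g1 σ‖ ≤ 1) (hb2 : ∀ σ, ‖g2 σ‖ ≤ 1)
    (h1 : tnorm (g1 - g1') ≤ ε * (3 * (d : ℝ) ^ (2 * r) + 1) ^ h)
    (h2 : tnorm (g2 - g2') ≤ ε * (3 * (d : ℝ) ^ (2 * r) + 1) ^ h)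
    (t : (↥(K ∪ J) → Fin d × Fin d) → ℂ)
    (ht : tnorm (t - Contr K J L g1 g2) ≤ ε) :
    tnorm (t - Contr K J L g1' g2') ≤ ε * (3 * (d : ℝ) ^ (2 * r) + 1) ^ (h + 1) := by
  set B : ℝ := 3 * (d : ℝ) ^ (2 * r) + 1
  set E : ℝ := ε * B ^ h
  have hLr : #L ≤ r := (card_le_card subset_union_right).trans hKr
  have hdL : (d : ℝ) ^ (2 * #L) ≤ d ^ (2 * r) :=
    pow_le_pow_right₀ (by exact_mod_cast hd) (by omega)
  have hεE : ε ≤ E :=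
    le_mul_of_one_le_right hε0 (one_le_pow₀ (le_add_of_nonneg_left (by positivity)))
  refine tnorm_le (by positivity) fun τ => ?_
  have hcontr := norm_contr_sub_contr_le hsmall hb1 hb2
    (fun σ => (norm_le_tnorm (g1 - g1') σ).trans h1)
    (fun σ => (norm_le_tnorm (g2 - g2') σ).trans h2) τ
  calc ‖(t - Contr K J L g1' g2') τ‖
      ≤ ‖(t - Contr K J L g1 g2) τ‖ + ‖Contr K J L g1 g2 τ - Contr K J L g1' g2' τ‖ :=
        norm_sub_le_norm_sub_add_norm_sub _ _ _
    _ ≤ E + d ^ (2 * r) * (3 * E) := by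
        gcongr
        · exact (norm_le_tnorm _ τ).trans (ht.trans hεE)
        · exact hcontr.trans (by gcongr)
    _ = ε * B ^ (h + 1) := by ring

/-- Let `d, r ≥ 1`, `h ≥ 0`, and `ε ≥ 0` with `ε·(3d^(2r)+1)^h ≤ 1`.
Let `K, J, L ⊆ ℕ` be pairwise disjoint finite sets with `L` nonempty,
`|K ∪ L| ≤ r` and `|J ∪ L| ≤ r`. Let `g1, g1'` be tensors with index set `K ∪ L` and
`g2, g2'` tensors with index set `J ∪ L`, where every entry of `g1` and of `g2` has
modulus at most `1`, `‖g1 − g1'‖ ≤ ε·(3d^(2r)+1)^h` and `‖g2 − g2'‖ ≤ ε·(3d^(2r)+1)^h`.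
Then every tensor `t` with index set `K ∪ J` with `‖t − Contr(g1,g2)‖ ≤ ε` satisfies
`‖t − Contr(g1',g2')‖ ≤ ε·(3d^(2r)+1)^(h+1)`. -/
theorem statement_9 (d r h : ℕ) (hd : 1 ≤ d) (hr : 1 ≤ r) (ε : ℝ) (hε0 : 0 ≤ ε)
    (hsmall : ε * (3 * (d : ℝ) ^ (2 * r) + 1) ^ h ≤ 1)
    (K J L : Finset ℕ)
    (hKJ : Disjoint K J) (hKL : Disjoint K L) (hJL : Disjoint J L)
    (hL : L.Nonempty) (hKr : (K ∪ L).card ≤ r) (hJr : (J ∪ L).card ≤ r)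
    (g1 g1' : (↥(K ∪ L) → Fin d × Fin d) → ℂ)
    (g2 g2' : (↥(J ∪ L) → Fin d × Fin d) → ℂ)
    (hb1 : ∀ σ, ‖g1 σ‖ ≤ 1) (hb2 : ∀ σ, ‖g2 σ‖ ≤ 1)
    (h1 : tnorm (g1 - g1') ≤ ε * (3 * (d : ℝ) ^ (2 * r) + 1) ^ h)
    (h2 : tnorm (g2 - g2') ≤ ε * (3 * (d : ℝ) ^ (2 * r) + 1) ^ h)
    (t : (↥(K ∪ J) → Fin d × Fin d) → ℂ)
    (ht : tnorm (t - Contr K J L g1 g2) ≤ ε) :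
    tnorm (t - Contr K J L g1' g2') ≤ ε * (3 * (d : ℝ) ^ (2 * r) + 1) ^ (h + 1) :=
  statement_9_general d r h hd ε hε0 hsmall K J L hKr g1 g1' g2 g2' hb1 hb2 h1 h2 t ht
end
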